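/- arXiv:1704.07871 — 10 statements merged into one kernel-verified Lean document; each statement's English description precedes it below -/
import Mathlib

section
/- Let f : I → ℝ∪{±∞} be non-decreasing on a compact nondegenerate interval I, and define the upper inverse f⁻¹(t) = sup{x ∈ I : f(x) ≤ t}. Then for every x ∈ I and every t in the extended reals, x ∈ Q_t^f if and only if t ∈ Q_x^{f⁻¹}. -/
open Set

/-- The quantile set `Q_t^f` of a function `f` on the interval `[a,b] ⊆ ℝ̄`,
with the conventions `inf ∅ = max I` and `sup ∅ = min I`. -/
noncomputable def Qset (a b : EReal) (f : EReal → EReal) (t : EReal) : Set EReal :=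
  Set.Icc (sInf ({x | x ∈ Set.Icc a b ∧ t ≤ f x} ∪ {b}))
          (sSup ({x | x ∈ Set.Icc a b ∧ f x ≤ t} ∪ {a}))

/-- The upper inverse `f⁻¹(t) = sup {x ∈ I : f x ≤ t}` (with `sup ∅ = min I = a`),
defined on all of the extended reals. -/
noncomputable def upperInv (a b : EReal) (f : EReal → EReal) (t : EReal) : EReal :=
  sSup ({x | x ∈ Set.Icc a b ∧ f x ≤ t} ∪ {a})

lemma a_le_upperInv (a b : EReal) (f : EReal → EReal) (t : EReal) :
    a ≤ upperInv a b f t :=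
  le_sSup (Or.inr rfl)

lemma upperInv_le_b (a b : EReal) (hab : a ≤ b) (f : EReal → EReal) (t : EReal) :
    upperInv a b f t ≤ b := by
  apply sSup_le
  rintro y (⟨⟨_, hy⟩, _⟩ | rfl)
  · exact hy
  · exact hab

lemma upperInv_mono (a b : EReal) (f : EReal → EReal) :
    Monotone (upperInv a b f) := by
  intro s t hst
  apply sSup_le_sSup
  rintro y (⟨hy1, hy2⟩ | rfl)
  · exact Or.inl ⟨hy1, hy2.trans hst⟩
  · exact Or.inr rfl

/-- Right-continuity of the upper inverse. -/
lemma upperInv_rc (a b : EReal) (f : EReal → EReal) (hf : MonotoneOn f (Set.Icc a b))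
    (x : EReal) (hx : x ∈ Set.Icc a b) (t : EReal)
    (h : ∀ s, t < s → x ≤ upperInv a b f s) : x ≤ upperInv a b f t := by
  by_contra hc
  push_neg at hc
  obtain ⟨z, hz1, hz2⟩ := exists_between hc
  obtain ⟨w, hw1, hw2⟩ := exists_between hz1
  have hwa : a ≤ w := ((a_le_upperInv a b f t).trans_lt hw1).le
  have hwb : w ≤ b := ((hw2.trans hz2).trans_le hx.2).le
  have hfw : f w ≤ t := by
    by_contra hft
    push_neg at hft
    obtain ⟨s, hs1, hs2⟩ := exists_between hft
    have hxs : z < upperInv a b f s := hz2.trans_le (h s hs1)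
    obtain ⟨y, hy, hzy⟩ := lt_sSup_iff.mp hxs
    rcases hy with ⟨hy1, hy2⟩ | rfl
    · have : f w ≤ f y := hf ⟨hwa, hwb⟩ hy1 (hw2.trans hzy).le
      exact absurd (this.trans hy2) (not_le.mpr hs2)
    · exact absurd ((hwa.trans_lt hw2).trans hzy) (lt_irrefl _)
  have : w ≤ upperInv a b f t := le_sSup (Or.inl ⟨⟨hwa, hwb⟩, hfw⟩)
  exact absurd this (not_le.mpr hw1)

theorem stmt2 (a b : EReal) (hab : a < b) (f : EReal → EReal)
    (hf : MonotoneOn f (Set.Icc a b)) :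
    ∀ x ∈ Set.Icc a b, ∀ t : EReal,
      x ∈ Qset a b f t ↔ t ∈ Qset ⊥ ⊤ (upperInv a b f) x := by
  intro x hx t
  set g := upperInv a b f with hg
  have hgmono := upperInv_mono a b f
  unfold Qset
  simp only [Set.mem_Icc, bot_le, le_top, true_and, and_true, Set.mem_setOf_eq]
  have hRsup : sSup ({s | g s ≤ x} ∪ {(⊥ : EReal)}) = sSup {s | g s ≤ x} := by
    rw [sSup_union, sSup_singleton, sup_bot_eq]
  have hRinf : sInf ({s | x ≤ g s} ∪ {(⊤ : EReal)}) = sInf {s | x ≤ g s} := by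
    rw [sInf_union, sInf_singleton, inf_top_eq]
  rw [hRsup, hRinf]
  constructor
  · rintro ⟨h1, h2⟩
    constructor
    · -- sInf {s | x ≤ g s} ≤ t  from  x ≤ g t
      exact sInf_le h2
    · -- t ≤ sSup {s | g s ≤ x}  from  sInf (A_t ∪ {b}) ≤ x
      by_contra hc
      push_neg at hc
      obtain ⟨s, hs1, hs2⟩ := exists_between hc
      have hsS : g s ≤ x := by
        apply sSup_le
        rintro y (⟨hy1, hy2⟩ | rfl)
        · by_contra hxy
          push_neg at hxy
          obtain ⟨u, hu, huy⟩ := sInf_lt_iff.mp (h1.trans_lt hxy)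
          rcases hu with ⟨hu1, hu2⟩ | rfl
          · have : f u ≤ f y := hf hu1 hy1 huy.le
            exact absurd ((hu2.trans this).trans hy2) (not_le.mpr hs2)
          · exact absurd huy (not_lt.mpr hy1.2)
        · exact hx.1
      exact absurd (le_sSup (show s ∈ {s | g s ≤ x} from hsS)) (not_le.mpr hs1)
  · rintro ⟨h1, h2⟩
    constructor
    · -- sInf (A_t ∪ {b}) ≤ x  from  t ≤ sSup {s | g s ≤ x}
      by_contra hc
      push_neg at hc
      obtain ⟨z, hz1, hz2⟩ := exists_between hc
      have hzb : z < b := hz2.trans_le (sInf_le (Or.inr rfl))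
      have hzmem : z ∈ Set.Icc a b := ⟨(hx.1.trans_lt hz1).le, hzb.le⟩
      have hfz : f z < t := by
        by_contra hft
        push_neg at hft
        have hle : sInf ({x | x ∈ Set.Icc a b ∧ t ≤ f x} ∪ {b}) ≤ z :=
          sInf_le (Or.inl ⟨hzmem, hft⟩)
        exact absurd hle (not_le.mpr hz2)
      have hsup : sSup {s | g s ≤ x} ≤ f z := by
        apply sSup_le
        intro s hs
        by_contra hsz
        push_neg at hsz
        have : z ≤ g s := le_sSup (Or.inl ⟨hzmem, hsz.le⟩)
        exact absurd (this.trans hs) (not_le.mpr hz1)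
      exact absurd (h2.trans hsup) (not_le.mpr hfz)
    · -- x ≤ g t  from  sInf {s | x ≤ g s} ≤ t
      apply upperInv_rc a b f hf x hx
      intro s hts
      obtain ⟨u, hu, hus⟩ := sInf_lt_iff.mp (h1.trans_lt hts)
      exact hu.trans (hgmono hus.le)
end

section
/- Let f : I → ℝ∪{±∞} be non-decreasing on a compact nondegenerate interval I. Then the growth set G^f := {x ∈ I : x is a growth point of f} is a closed subset of I, and it is non-empty unless f is constant. -/
open Set

/-- The growth set of `f` on `[a,b]`: points `x` such that `f y < f x` for all `y < x` in the
interval, or `f x < f y` for all `y > x` in the interval. -/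
def growthSet (a b : EReal) (f : EReal → EReal) : Set EReal :=
  {x | x ∈ Set.Icc a b ∧
    ((∀ y ∈ Set.Icc a b, y < x → f y < f x) ∨ (∀ y ∈ Set.Icc a b, x < y → f x < f y))}

theorem stmt3 (a b : EReal) (hab : a < b) (f : EReal → EReal)
    (hf : MonotoneOn f (Set.Icc a b)) :
    IsClosed (growthSet a b f) ∧
      ((∃ x ∈ Set.Icc a b, ∃ y ∈ Set.Icc a b, f x ≠ f y) → (growthSet a b f).Nonempty) := by
  constructor
  · rw [← isOpen_compl_iff, isOpen_iff_mem_nhds]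
    intro x hx
    by_cases hxI : x ∈ Set.Icc a b
    · simp only [growthSet, mem_compl_iff, mem_setOf_eq, not_and, not_or] at hx
      obtain ⟨h1, h2⟩ := hx hxI
      push_neg at h1 h2
      obtain ⟨y1, hy1, hy1x, hfy1⟩ := h1
      obtain ⟨y2, hy2, hxy2, hfy2⟩ := h2
      have e1 : f y1 = f x := le_antisymm (hf hy1 hxI hy1x.le) hfy1
      have e2 : f x = f y2 := le_antisymm (hf hxI hy2 hxy2.le) hfy2
      have hmem : Ioo y1 y2 ∈ nhds x := Ioo_mem_nhds hy1x hxy2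
      filter_upwards [hmem] with z hz
      simp only [growthSet, mem_compl_iff, mem_setOf_eq, not_and, not_or]
      intro hzI
      have ez : f z = f x := by
        have ha1 : f y1 ≤ f z := hf hy1 hzI hz.1.le
        have ha2 : f z ≤ f y2 := hf hzI hy2 hz.2.le
        rw [e1] at ha1; rw [← e2] at ha2; exact le_antisymm ha2 ha1
      constructor
      · push_neg
        exact ⟨y1, hy1, hz.1, by rw [ez, ← e1]⟩
      · push_neg
        exact ⟨y2, hy2, hz.2, by rw [ez, e2]⟩
    · have hm : (Set.Icc a b)ᶜ ∈ nhds x := (isClosed_Icc.isOpen_compl).mem_nhds hxI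
      filter_upwards [hm] with z hz
      exact fun h => hz h.1
  · rintro ⟨x, hx, y, hy, hfxy⟩
    have key : ∀ u ∈ Set.Icc a b, ∀ v ∈ Set.Icc a b, f u < f v → f a < f b := by
      intro u hu v hv huv
      exact lt_of_le_of_lt (hf (left_mem_Icc.2 hab.le) hu hu.1)
        (lt_of_lt_of_le huv (hf hv (right_mem_Icc.2 hab.le) hv.2))
    have hab' : f a < f b := by
      rcases lt_trichotomy x y with h | h | h
      · exact key x hx y hy (lt_of_le_of_ne (hf hx hy h.le) hfxy)
      · exact absurd (congrArg f h) hfxy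
      · exact key y hy x hx (lt_of_le_of_ne (hf hy hx h.le) (Ne.symm hfxy))
    set S := {x ∈ Set.Icc a b | f x < f b} with hS
    have haS : a ∈ S := ⟨left_mem_Icc.2 hab.le, hab'⟩
    set c := sSup S with hc
    have hcI : c ∈ Set.Icc a b := ⟨le_sSup haS, sSup_le fun s hs => hs.1.2⟩
    refine ⟨c, hcI, ?_⟩
    by_cases hcb : f c < f b
    · right
      intro z hz hcz
      have hzS : z ∉ S := fun h => absurd (le_sSup h) (not_le.2 hcz)
      have hbz : f b ≤ f z := not_lt.1 fun h => hzS ⟨hz, h⟩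
      exact lt_of_lt_of_le hcb hbz
    · left
      have hcbe : f c = f b := le_antisymm (hf hcI (right_mem_Icc.2 hab.le) hcI.2) (not_lt.1 hcb)
      intro z hz hzc
      obtain ⟨s, hs, hzs⟩ := lt_sSup_iff.1 hzc
      calc f z ≤ f s := hf hz hs.1 hzs.le
        _ < f b := hs.2
        _ = f c := hcbe.symm
end

section
/- Let I ⊂ ℝ be a bounded interval and f : I → ℝ∪{±∞} measurable and finite almost everywhere. Define ℓ_f(t) = ½(min I + max I + λ({f < t}) − λ({f > t})), where λ is Lebesgue measure. Then ℓ_f is non-decreasing, and for every real t, ℓ_f(t+) − ℓ_f(t−) = λ({f = t}); in particular, ℓ_f is continuous at t if and only if λ({f = t}) = 0. -/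
open Set MeasureTheory Filter Topology

/-- The auxiliary function `ℓ_f(t) = ½(min I + max I + λ({f < t}) − λ({f > t}))`
for `f` defined on `I = [a,b]`. -/
noncomputable def ell (a b : ℝ) (f : ℝ → EReal) (t : ℝ) : ℝ :=
  (a + b + (volume {x | x ∈ Set.Icc a b ∧ f x < (t : EReal)}).toReal
    - (volume {x | x ∈ Set.Icc a b ∧ (t : EReal) < f x}).toReal) / 2

section aux

variable (a b : ℝ) (f : ℝ → EReal)

private lemma vol_ne_top (S : Set ℝ) (hS : S ⊆ Set.Icc a b) : volume S ≠ ⊤ :=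
  ne_top_of_le_ne_top (by simp [measure_Icc_lt_top.ne]) (measure_mono hS)

private lemma meas_lt (hmeas : Measurable f) (t : ℝ) :
    MeasurableSet {x | x ∈ Set.Icc a b ∧ f x < (t : EReal)} := by
  have : {x | x ∈ Set.Icc a b ∧ f x < (t : EReal)}
      = Set.Icc a b ∩ f ⁻¹' (Set.Iio (t : EReal)) := rfl
  rw [this]
  exact measurableSet_Icc.inter (hmeas measurableSet_Iio)

private lemma meas_gt (hmeas : Measurable f) (t : ℝ) :
    MeasurableSet {x | x ∈ Set.Icc a b ∧ (t : EReal) < f x} := by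
  have : {x | x ∈ Set.Icc a b ∧ (t : EReal) < f x}
      = Set.Icc a b ∩ f ⁻¹' (Set.Ioi (t : EReal)) := rfl
  rw [this]
  exact measurableSet_Icc.inter (hmeas measurableSet_Ioi)

private lemma ell_mono : Monotone (ell a b f) := by
  intro s t hst
  unfold ell
  have h1 : (volume {x | x ∈ Set.Icc a b ∧ f x < (s : EReal)}).toReal
      ≤ (volume {x | x ∈ Set.Icc a b ∧ f x < (t : EReal)}).toReal := by
    apply ENNReal.toReal_mono (vol_ne_top a b _ (fun x hx => hx.1))
    exact measure_mono fun x hx => ⟨hx.1, hx.2.trans_le (by exact_mod_cast hst)⟩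
  have h2 : (volume {x | x ∈ Set.Icc a b ∧ (t : EReal) < f x}).toReal
      ≤ (volume {x | x ∈ Set.Icc a b ∧ (s : EReal) < f x}).toReal := by
    apply ENNReal.toReal_mono (vol_ne_top a b _ (fun x hx => hx.1))
    exact measure_mono fun x hx => ⟨hx.1, lt_of_le_of_lt (by exact_mod_cast hst) hx.2⟩
  have : a + b + (volume {x | x ∈ Set.Icc a b ∧ f x < (s : EReal)}).toReal
      - (volume {x | x ∈ Set.Icc a b ∧ (s : EReal) < f x}).toReal
      ≤ a + b + (volume {x | x ∈ Set.Icc a b ∧ f x < (t : EReal)}).toReal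
      - (volume {x | x ∈ Set.Icc a b ∧ (t : EReal) < f x}).toReal := by linarith
  linarith

/-- The left limit of `ell` at `t`. -/
private lemma ell_leftLim (hmeas : Measurable f) (t : ℝ) :
    Function.leftLim (ell a b f) t
      = (a + b + (volume {x | x ∈ Set.Icc a b ∧ f x < (t : EReal)}).toReal
          - (volume {x | x ∈ Set.Icc a b ∧ (t : EReal) ≤ f x}).toReal) / 2 := by
  set u : ℕ → ℝ := fun n => t - 1 / (n + 1) with hu
  have hult : ∀ n, u n < t := fun n => by
    have : (0:ℝ) < 1 / (n + 1) := by positivity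
    simp only [hu]; linarith
  have hulim : Tendsto u atTop (𝓝 t) := by
    have h0 : Tendsto (fun n : ℕ => 1 / ((n:ℝ) + 1)) atTop (𝓝 0) :=
      tendsto_one_div_add_atTop_nhds_zero_nat
    have := tendsto_const_nhds (x := t) (f := atTop (α := ℕ)) |>.sub h0
    simpa only [hu, one_div, sub_zero, add_zero] using this
  have humono : Monotone u := by
    intro m n hmn
    have : (1:ℝ) / (n + 1) ≤ 1 / (m + 1) := by
      apply one_div_le_one_div_of_le (by positivity)
      exact_mod_cast by linarith [(Nat.cast_le (α := ℝ)).mpr hmn]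
    simp only [hu]; linarith
  -- sequence tendsto within Iio t
  have huwithin : Tendsto u atTop (𝓝[<] t) :=
    tendsto_nhdsWithin_of_tendsto_nhds_of_eventually_within _ hulim
      (Eventually.of_forall fun n => hult n)
  -- ell (u n) tends to leftLim
  have h1 : Tendsto (fun n => ell a b f (u n)) atTop (𝓝 (Function.leftLim (ell a b f) t)) :=
    ((ell_mono a b f).tendsto_leftLim t).comp huwithin
  -- measure limits
  have hUnion : (⋃ n, {x | x ∈ Set.Icc a b ∧ f x < ((u n : ℝ) : EReal)})
      = {x | x ∈ Set.Icc a b ∧ f x < (t : EReal)} := by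
    ext x
    simp only [mem_iUnion, mem_setOf_eq]
    constructor
    · rintro ⟨n, hx, hlt⟩
      exact ⟨hx, hlt.trans (by exact_mod_cast hult n)⟩
    · rintro ⟨hx, hlt⟩
      obtain ⟨r, hr1, hr2⟩ := EReal.exists_between_coe_real hlt
      have hrt : r < t := by exact_mod_cast hr2
      obtain ⟨n, hn⟩ := (hulim.eventually (eventually_gt_nhds hrt)).exists
      exact ⟨n, hx, hr1.trans (by exact_mod_cast hn)⟩
  have hInter : (⋂ n, {x | x ∈ Set.Icc a b ∧ ((u n : ℝ) : EReal) < f x})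
      = {x | x ∈ Set.Icc a b ∧ (t : EReal) ≤ f x} := by
    ext x
    simp only [mem_iInter, mem_setOf_eq]
    constructor
    · intro h
      refine ⟨(h 0).1, ?_⟩
      by_contra hcon
      push_neg at hcon
      obtain ⟨r, hr1, hr2⟩ := EReal.exists_between_coe_real hcon
      have hrt : r < t := by exact_mod_cast hr2
      obtain ⟨n, hn⟩ := (hulim.eventually (eventually_gt_nhds hrt)).exists
      exact absurd ((h n).2.trans hr1) (not_lt.mpr (by exact_mod_cast hn.le))
    · rintro ⟨hx, hle⟩ n
      exact ⟨hx, lt_of_lt_of_le (by exact_mod_cast hult n) hle⟩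
  have hg : Tendsto (fun n => volume {x | x ∈ Set.Icc a b ∧ f x < ((u n : ℝ) : EReal)}) atTop
      (𝓝 (volume {x | x ∈ Set.Icc a b ∧ f x < (t : EReal)})) := by
    rw [← hUnion]
    exact tendsto_measure_iUnion_atTop fun m n hmn x hx =>
      ⟨hx.1, hx.2.trans_le (by exact_mod_cast humono hmn)⟩
  have hh : Tendsto (fun n => volume {x | x ∈ Set.Icc a b ∧ ((u n : ℝ) : EReal) < f x}) atTop
      (𝓝 (volume {x | x ∈ Set.Icc a b ∧ (t : EReal) ≤ f x})) := by
    rw [← hInter]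
    refine tendsto_measure_iInter_atTop (fun n => (meas_gt a b f hmeas (u n)).nullMeasurableSet)
      (fun m n hmn x hx => ⟨hx.1, lt_of_le_of_lt (by exact_mod_cast humono hmn) hx.2⟩)
      ⟨0, vol_ne_top a b _ fun x hx => hx.1⟩
  have hgR := (ENNReal.tendsto_toReal (vol_ne_top a b _ (fun x hx => hx.1))).comp hg
  have hhR := (ENNReal.tendsto_toReal (vol_ne_top a b _ (fun x hx => hx.1))).comp hh
  have h2 : Tendsto (fun n => ell a b f (u n)) atTop
      (𝓝 ((a + b + (volume {x | x ∈ Set.Icc a b ∧ f x < (t : EReal)}).toReal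
          - (volume {x | x ∈ Set.Icc a b ∧ (t : EReal) ≤ f x}).toReal) / 2)) := by
    exact (((tendsto_const_nhds.add hgR).sub hhR).div_const 2)
  exact tendsto_nhds_unique h1 h2

/-- The right limit of `ell` at `t`. -/
private lemma ell_rightLim (hmeas : Measurable f) (t : ℝ) :
    Function.rightLim (ell a b f) t
      = (a + b + (volume {x | x ∈ Set.Icc a b ∧ f x ≤ (t : EReal)}).toReal
          - (volume {x | x ∈ Set.Icc a b ∧ (t : EReal) < f x}).toReal) / 2 := by
  set u : ℕ → ℝ := fun n => t + 1 / (n + 1) with hu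
  have hult : ∀ n, t < u n := fun n => by
    have : (0:ℝ) < 1 / (n + 1) := by positivity
    simp only [hu]; linarith
  have hulim : Tendsto u atTop (𝓝 t) := by
    have h0 : Tendsto (fun n : ℕ => 1 / ((n:ℝ) + 1)) atTop (𝓝 0) :=
      tendsto_one_div_add_atTop_nhds_zero_nat
    have := tendsto_const_nhds (x := t) (f := atTop (α := ℕ)) |>.add h0
    simpa only [hu, one_div, sub_zero, add_zero] using this
  have humono : Antitone u := by
    intro m n hmn
    have : (1:ℝ) / (n + 1) ≤ 1 / (m + 1) := by
      apply one_div_le_one_div_of_le (by positivity)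
      exact_mod_cast by linarith [(Nat.cast_le (α := ℝ)).mpr hmn]
    simp only [hu]; linarith
  have huwithin : Tendsto u atTop (𝓝[>] t) :=
    tendsto_nhdsWithin_of_tendsto_nhds_of_eventually_within _ hulim
      (Eventually.of_forall fun n => hult n)
  have h1 : Tendsto (fun n => ell a b f (u n)) atTop (𝓝 (Function.rightLim (ell a b f) t)) :=
    ((ell_mono a b f).tendsto_rightLim t).comp huwithin
  have hInter : (⋂ n, {x | x ∈ Set.Icc a b ∧ f x < ((u n : ℝ) : EReal)})
      = {x | x ∈ Set.Icc a b ∧ f x ≤ (t : EReal)} := by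
    ext x
    simp only [mem_iInter, mem_setOf_eq]
    constructor
    · intro h
      refine ⟨(h 0).1, ?_⟩
      by_contra hcon
      push_neg at hcon
      obtain ⟨r, hr1, hr2⟩ := EReal.exists_between_coe_real hcon
      have hrt : t < r := by exact_mod_cast hr1
      obtain ⟨n, hn⟩ := (hulim.eventually (eventually_lt_nhds hrt)).exists
      exact absurd ((h n).2.trans_le (by exact_mod_cast hn.le : ((u n : ℝ):EReal) ≤ (r:EReal))) (not_lt.mpr hr2.le)
    · rintro ⟨hx, hle⟩ n
      exact ⟨hx, lt_of_le_of_lt hle (by exact_mod_cast hult n)⟩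
  have hUnion : (⋃ n, {x | x ∈ Set.Icc a b ∧ ((u n : ℝ) : EReal) < f x})
      = {x | x ∈ Set.Icc a b ∧ (t : EReal) < f x} := by
    ext x
    simp only [mem_iUnion, mem_setOf_eq]
    constructor
    · rintro ⟨n, hx, hlt⟩
      exact ⟨hx, lt_trans (by exact_mod_cast hult n) hlt⟩
    · rintro ⟨hx, hlt⟩
      obtain ⟨r, hr1, hr2⟩ := EReal.exists_between_coe_real hlt
      have hrt : t < r := by exact_mod_cast hr1
      obtain ⟨n, hn⟩ := (hulim.eventually (eventually_lt_nhds hrt)).exists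
      exact ⟨n, hx, lt_of_le_of_lt (by exact_mod_cast hn.le : ((u n : ℝ):EReal) ≤ (r:EReal)) hr2⟩
  have hg : Tendsto (fun n => volume {x | x ∈ Set.Icc a b ∧ f x < ((u n : ℝ) : EReal)}) atTop
      (𝓝 (volume {x | x ∈ Set.Icc a b ∧ f x ≤ (t : EReal)})) := by
    rw [← hInter]
    refine tendsto_measure_iInter_atTop (fun n => (meas_lt a b f hmeas (u n)).nullMeasurableSet)
      (fun m n hmn x hx => ⟨hx.1, hx.2.trans_le (by exact_mod_cast humono hmn)⟩)
      ⟨0, vol_ne_top a b _ fun x hx => hx.1⟩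
  have hh : Tendsto (fun n => volume {x | x ∈ Set.Icc a b ∧ ((u n : ℝ) : EReal) < f x}) atTop
      (𝓝 (volume {x | x ∈ Set.Icc a b ∧ (t : EReal) < f x})) := by
    rw [← hUnion]
    exact tendsto_measure_iUnion_atTop fun m n hmn x hx =>
      ⟨hx.1, lt_of_le_of_lt (by exact_mod_cast humono hmn) hx.2⟩
  have hgR := (ENNReal.tendsto_toReal (vol_ne_top a b _ (fun x hx => hx.1))).comp hg
  have hhR := (ENNReal.tendsto_toReal (vol_ne_top a b _ (fun x hx => hx.1))).comp hh
  have h2 : Tendsto (fun n => ell a b f (u n)) atTop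
      (𝓝 ((a + b + (volume {x | x ∈ Set.Icc a b ∧ f x ≤ (t : EReal)}).toReal
          - (volume {x | x ∈ Set.Icc a b ∧ (t : EReal) < f x}).toReal) / 2)) :=
    (((tendsto_const_nhds.add hgR).sub hhR).div_const 2)
  exact tendsto_nhds_unique h1 h2

/-- The jump formula. -/
private lemma ell_jump (hmeas : Measurable f) (t : ℝ) :
    Function.rightLim (ell a b f) t - Function.leftLim (ell a b f) t
      = (volume {x | x ∈ Set.Icc a b ∧ f x = (t : EReal)}).toReal := by
  rw [ell_leftLim a b f hmeas t, ell_rightLim a b f hmeas t]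
  have hmeq : MeasurableSet {x | x ∈ Set.Icc a b ∧ f x = (t : EReal)} := by
    have : {x | x ∈ Set.Icc a b ∧ f x = (t : EReal)}
        = Set.Icc a b ∩ f ⁻¹' {(t : EReal)} := rfl
    rw [this]
    exact measurableSet_Icc.inter (hmeas (measurableSet_singleton _))
  have hle : volume {x | x ∈ Set.Icc a b ∧ f x ≤ (t : EReal)}
      = volume {x | x ∈ Set.Icc a b ∧ f x < (t : EReal)}
        + volume {x | x ∈ Set.Icc a b ∧ f x = (t : EReal)} := by
    rw [← measure_union _ hmeq]
    · congr 1
      ext x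
      simp only [mem_union, mem_setOf_eq]
      constructor
      · rintro ⟨hx, h⟩
        rcases lt_or_eq_of_le h with h' | h'
        · exact Or.inl ⟨hx, h'⟩
        · exact Or.inr ⟨hx, h'⟩
      · rintro (⟨hx, h⟩ | ⟨hx, h⟩)
        · exact ⟨hx, h.le⟩
        · exact ⟨hx, h.le⟩
    · exact fun s hs1 hs2 x hx => absurd ((hs2 hx).2 ▸ (hs1 hx).2) (lt_irrefl _)
  have hge : volume {x | x ∈ Set.Icc a b ∧ (t : EReal) ≤ f x}
      = volume {x | x ∈ Set.Icc a b ∧ (t : EReal) < f x}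
        + volume {x | x ∈ Set.Icc a b ∧ f x = (t : EReal)} := by
    rw [← measure_union _ hmeq]
    · congr 1
      ext x
      simp only [mem_union, mem_setOf_eq]
      constructor
      · rintro ⟨hx, h⟩
        rcases lt_or_eq_of_le h with h' | h'
        · exact Or.inl ⟨hx, h'⟩
        · exact Or.inr ⟨hx, h'.symm⟩
      · rintro (⟨hx, h⟩ | ⟨hx, h⟩)
        · exact ⟨hx, h.le⟩
        · exact ⟨hx, h.ge⟩
    · exact fun s hs1 hs2 x hx => absurd ((hs2 hx).2 ▸ (hs1 hx).2) (lt_irrefl _)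
  have f1 := vol_ne_top a b {x | x ∈ Set.Icc a b ∧ f x < (t : EReal)} (fun x hx => hx.1)
  have f2 := vol_ne_top a b {x | x ∈ Set.Icc a b ∧ (t : EReal) < f x} (fun x hx => hx.1)
  have f3 := vol_ne_top a b {x | x ∈ Set.Icc a b ∧ f x = (t : EReal)} (fun x hx => hx.1)
  rw [hle, hge, ENNReal.toReal_add f1 f3, ENNReal.toReal_add f2 f3]
  ring

end aux

theorem stmt4 (a b : ℝ) (hab : a < b) (f : ℝ → EReal) (hmeas : Measurable f)
    (hfin : volume {x | x ∈ Set.Icc a b ∧ (f x = ⊤ ∨ f x = ⊥)} = 0) :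
    Monotone (ell a b f) ∧
      (∀ t : ℝ,
        Function.rightLim (ell a b f) t - Function.leftLim (ell a b f) t
          = (volume {x | x ∈ Set.Icc a b ∧ f x = (t : EReal)}).toReal) ∧
      (∀ t : ℝ,
        ContinuousAt (ell a b f) t ↔ volume {x | x ∈ Set.Icc a b ∧ f x = (t : EReal)} = 0) := by
  refine ⟨ell_mono a b f, fun t => ell_jump a b f hmeas t, fun t => ?_⟩
  rw [(ell_mono a b f).continuousAt_iff_leftLim_eq_rightLim]
  constructor
  · intro h
    have := ell_jump a b f hmeas t
    rw [← h, sub_self] at this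
    have h0 : (volume {x | x ∈ Set.Icc a b ∧ f x = (t : EReal)}).toReal = 0 := this.symm
    rcases (ENNReal.toReal_eq_zero_iff _).mp h0 with h' | h'
    · exact h'
    · exact absurd h' (vol_ne_top a b _ fun x hx => hx.1)
  · intro h
    have := ell_jump a b f hmeas t
    rw [h] at this
    simp only [ENNReal.toReal_zero] at this
    linarith [sub_eq_zero.mp this]
end

section
/- Let I ⊂ ℝ be a bounded interval and f : I → ℝ∪{±∞} measurable and finite a.e. Call f − t balanced if |λ({f > t}) − λ({f < t})| ≤ λ({f = t}), and let B^f be the set of all such balanced values t. Then B^f equals the quantile set Q_{½(min I + max I)}^{ℓ_f}; in particular B^f is a non-empty compact interval. -/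
/-!
Write `L t`, `E t`, `G t` for the masses of `{f < t}`, `{f = t}`, `{f > t}`, so that
`L + E + G = m` is the total mass and `t` is balanced iff `L t ≤ m/2` and `G t ≤ m/2`.
Since `G` is antitone and right-continuous, `{G ≤ m/2}` is a closed ray `[T, ∞)`. Moreover
`G ≤ L` forces `G ≤ m/2`, while `G t ≤ m/2` gives `G s ≤ m - G t ≤ L s` for every `s > t`,
so `T = inf {G ≤ L}`. Applied to `-f`, this gives `{L ≤ m/2} = (-∞, sup {L ≤ G}]`. The two
rays meet because `L t` and `G t` cannot both exceed `m/2`. Finiteness of `f` a.e. makes `L`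
and `G` tend to `m` at `±∞`, which keeps `{G ≤ L}` and `{L ≤ G}` non-empty and bounded.
-/

open Set MeasureTheory

/-- The set of balanced values of `f` on `[a,b]`:
`t` with `|λ({f > t}) − λ({f < t})| ≤ λ({f = t})`. -/
noncomputable def Bset (a b : ℝ) (f : ℝ → EReal) : Set ℝ :=
  {t : ℝ | |(volume {x | x ∈ Set.Icc a b ∧ (t : EReal) < f x}).toReal
      - (volume {x | x ∈ Set.Icc a b ∧ f x < (t : EReal)}).toReal|
    ≤ (volume {x | x ∈ Set.Icc a b ∧ f x = (t : EReal)}).toReal}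

open Filter Topology

section
variable {α : Type*} [MeasurableSpace α] (μ : Measure α) (f : α → EReal)

noncomputable def massBelow (t : ℝ) : ℝ := μ.real {x | f x < t}

noncomputable def massAbove (t : ℝ) : ℝ := μ.real {x | (t : EReal) < f x}

noncomputable def massAt (t : ℝ) : ℝ := μ.real {x | f x = t}

noncomputable def balancedSet : Set ℝ :=
  {t | |massAbove μ f t - massBelow μ f t| ≤ massAt μ f t}

variable {μ f}

lemma massAbove_neg (t : ℝ) : massAbove μ (-f) t = massBelow μ f (-t) := by
  simp only [massAbove, massBelow, Pi.neg_apply, EReal.lt_neg_comm, EReal.coe_neg]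

lemma massBelow_neg (t : ℝ) : massBelow μ (-f) t = massAbove μ f (-t) := by
  simp only [massAbove, massBelow, Pi.neg_apply, EReal.neg_lt_comm, EReal.coe_neg]

lemma massAt_nonneg (t : ℝ) : 0 ≤ massAt μ f t := measureReal_nonneg

lemma massAbove_anti [IsFiniteMeasure μ] : Antitone (massAbove μ f) := fun _ _ hst ↦
  measureReal_mono fun _ hx ↦ (EReal.coe_le_coe_iff.2 hst).trans_lt hx

lemma massBelow_add_massAt [IsFiniteMeasure μ] (hf : Measurable f) (t : ℝ) :
    massBelow μ f t + massAt μ f t = μ.real {x | f x ≤ t} := by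
  rw [massBelow, massAt, ← measureReal_union (disjoint_left.2 fun _ hlt heq ↦ hlt.ne heq)
    (measurableSet_eq_fun hf measurable_const)]
  congr 1
  ext x
  exact (le_iff_lt_or_eq (a := f x)).symm

lemma massAbove_eq_sub [IsFiniteMeasure μ] (hf : Measurable f) (t : ℝ) :
    massAbove μ f t = μ.real univ - μ.real {x | f x ≤ t} := by
  rw [massAbove, ← measureReal_compl (measurableSet_le hf measurable_const), compl_ofPred]
  simp_rw [not_le]

lemma massBelow_add_massAt_add_massAbove [IsFiniteMeasure μ] (hf : Measurable f) (t : ℝ) :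
    massBelow μ f t + massAt μ f t + massAbove μ f t = μ.real univ := by
  rw [massBelow_add_massAt hf, massAbove_eq_sub hf]
  ring

lemma massBelow_add_massAt_le [IsFiniteMeasure μ] (hf : Measurable f) {s t : ℝ} (hst : s < t) :
    massBelow μ f s + massAt μ f s ≤ massBelow μ f t := by
  rw [massBelow_add_massAt hf]
  exact measureReal_mono fun _ hx ↦ lt_of_le_of_lt hx (EReal.coe_lt_coe_iff.2 hst)

lemma continuousWithinAt_massAbove [IsFiniteMeasure μ] (hf : Measurable f) (t : ℝ) :
    ContinuousWithinAt (massAbove μ f) (Ioi t) t := by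
  have hInter : ⋂ r > t, {x | f x ≤ (r : EReal)} = {x | f x ≤ t} := by
    ext x
    simp only [mem_iInter, mem_ofPred_eq]
    refine ⟨fun h ↦ not_lt.1 fun hlt ↦ ?_,
      fun h r hr ↦ h.trans (EReal.coe_le_coe_iff.2 hr.le)⟩
    obtain ⟨r, htr, hrx⟩ := EReal.lt_iff_exists_real_btwn.1 hlt
    exact (h r (EReal.coe_lt_coe_iff.1 htr)).not_gt hrx
  have hle : Tendsto (fun r : ℝ ↦ μ {x | f x ≤ r}) (𝓝[>] t) (𝓝 (μ {x | f x ≤ t})) := by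
    rw [← hInter]
    exact tendsto_measure_biInter_gt
      (fun r _ ↦ (measurableSet_le hf measurable_const).nullMeasurableSet)
      (fun i j _ hij x hx ↦ le_trans hx (EReal.coe_le_coe_iff.2 hij))
      ⟨t + 1, by linarith, measure_ne_top _ _⟩
  have hle_real : Tendsto (fun r : ℝ ↦ μ.real {x | f x ≤ r}) (𝓝[>] t)
      (𝓝 (μ.real {x | f x ≤ t})) :=
    (ENNReal.tendsto_toReal (measure_ne_top _ _)).comp hle
  rw [ContinuousWithinAt, funext (massAbove_eq_sub hf)]
  exact hle_real.const_sub _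

lemma tendsto_massBelow_atTop [IsFiniteMeasure μ] (htop : μ {x | f x = ⊤} = 0) :
    Tendsto (massBelow μ f) atTop (𝓝 (μ.real univ)) := by
  have hUnion : ⋃ r : ℝ, {x | f x < (r : EReal)} = {x | f x = ⊤}ᶜ := by
    ext x
    simp only [mem_iUnion, mem_ofPred_eq, mem_compl_iff, ← lt_top_iff_ne_top]
    refine ⟨fun ⟨r, hr⟩ ↦ hr.trans (EReal.coe_lt_top r), fun h ↦ ?_⟩
    obtain ⟨r, hr, -⟩ := EReal.lt_iff_exists_real_btwn.1 h
    exact ⟨r, hr⟩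
  have hmono : Monotone fun r : ℝ ↦ {x | f x < (r : EReal)} :=
    fun _ _ h _ hx ↦ hx.trans_le (EReal.coe_le_coe_iff.2 h)
  have hlim := tendsto_measure_iUnion_atTop (μ := μ) hmono
  rw [hUnion, compl_eq_univ_sdiff, measure_sdiff_null htop] at hlim
  exact (ENNReal.tendsto_toReal (measure_ne_top _ _)).comp hlim

lemma tendsto_massAbove_atBot [IsFiniteMeasure μ] (hbot : μ {x | f x = ⊥} = 0) :
    Tendsto (massAbove μ f) atBot (𝓝 (μ.real univ)) := by
  have htop : μ {x | (-f) x = ⊤} = 0 := by simpa only [Pi.neg_apply, EReal.neg_eq_top_iff]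
  have hlim := (tendsto_massBelow_atTop htop).comp tendsto_neg_atBot_atTop
  simpa only [Function.comp_def, massBelow_neg, neg_neg] using hlim

lemma setOf_massAbove_le_half_eq_Ici [IsFiniteMeasure μ] [NeZero μ] (hf : Measurable f)
    (htop : μ {x | f x = ⊤} = 0) (hbot : μ {x | f x = ⊥} = 0) :
    {t | massAbove μ f t ≤ μ.real univ / 2} =
      Ici (sInf {t | massAbove μ f t ≤ massBelow μ f t}) := by
  set S := {t | massAbove μ f t ≤ massBelow μ f t}
  have hsum := massBelow_add_massAt_add_massAbove (μ := μ) hf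
  have hE : ∀ t, 0 ≤ massAt μ f t := massAt_nonneg
  have half_of_mem : ∀ t ∈ S, massAbove μ f t ≤ μ.real univ / 2 := fun t ht ↦ by
    linarith [show massAbove μ f t ≤ massBelow μ f t from ht, hsum t, hE t]
  have mem_of_lt : ∀ t s, massAbove μ f t ≤ μ.real univ / 2 → t < s → s ∈ S :=
    fun t s ht hts ↦ by
      have := massBelow_add_massAt_le (μ := μ) hf hts
      have := massAbove_anti (μ := μ) (f := f) hts.le
      show massAbove μ f s ≤ massBelow μ f s
      linarith [hsum t]
  have hhalf : μ.real univ / 2 < μ.real univ := half_lt_self (measureReal_univ_pos (μ := μ))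
  obtain ⟨t₁, ht₁⟩ := ((tendsto_order.1 (tendsto_massBelow_atTop htop)).1 _ hhalf).exists
  obtain ⟨t₀, ht₀⟩ := ((tendsto_order.1 (tendsto_massAbove_atBot hbot)).1 _ hhalf).exists
  have hne : S.Nonempty :=
    ⟨t₁, show massAbove μ f t₁ ≤ massBelow μ f t₁ by linarith [hsum t₁, hE t₁]⟩
  have hbdd : BddBelow S := ⟨t₀, fun t ht ↦ not_lt.1 fun hlt ↦
    (half_of_mem t ht).not_gt (ht₀.trans_le (massAbove_anti hlt.le))⟩
  ext t
  constructor
  · exact fun ht ↦ le_of_forall_gt_imp_ge_of_dense fun s hs ↦ csInf_le hbdd (mem_of_lt t s ht hs)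
  · intro ht
    refine le_of_tendsto (continuousWithinAt_massAbove hf t)
      (eventually_nhdsWithin_of_forall fun s hs ↦ ?_)
    obtain ⟨u, huS, hus⟩ := exists_lt_of_csInf_lt hne (lt_of_le_of_lt ht hs)
    exact (massAbove_anti hus.le).trans (half_of_mem u huS)

lemma setOf_massBelow_le_half_eq_Iic [IsFiniteMeasure μ] [NeZero μ] (hf : Measurable f)
    (htop : μ {x | f x = ⊤} = 0) (hbot : μ {x | f x = ⊥} = 0) :
    {t | massBelow μ f t ≤ μ.real univ / 2} =
      Iic (sSup {t | massBelow μ f t ≤ massAbove μ f t}) := by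
  have h := setOf_massAbove_le_half_eq_Ici (f := -f) hf.neg
    (by simpa only [Pi.neg_apply, EReal.neg_eq_top_iff])
    (by simpa only [Pi.neg_apply, EReal.neg_eq_bot_iff])
  simp only [massAbove_neg, massBelow_neg] at h
  change _ = Ici (sInf (-{t | massBelow μ f t ≤ massAbove μ f t})) at h
  rw [Real.sInf_neg] at h
  ext t
  simpa only [mem_ofPred_eq, neg_neg, mem_Ici, mem_Iic, neg_le_neg_iff] using Set.ext_iff.1 h (-t)

lemma abs_massAbove_sub_massBelow_le_iff [IsFiniteMeasure μ] (hf : Measurable f) (t : ℝ) :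
    |massAbove μ f t - massBelow μ f t| ≤ massAt μ f t ↔
      massAbove μ f t ≤ μ.real univ / 2 ∧ massBelow μ f t ≤ μ.real univ / 2 := by
  have hsum := massBelow_add_massAt_add_massAbove (μ := μ) hf t
  rw [abs_le]
  constructor <;> rintro ⟨h₁, h₂⟩ <;> constructor <;> linarith

theorem balancedSet_eq_Icc [IsFiniteMeasure μ] [NeZero μ] (hf : Measurable f)
    (htop : μ {x | f x = ⊤} = 0) (hbot : μ {x | f x = ⊥} = 0) :
    balancedSet μ f = Icc (sInf {t | massAbove μ f t ≤ massBelow μ f t})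
      (sSup {t | massBelow μ f t ≤ massAbove μ f t}) := by
  rw [← Ici_inter_Iic, ← setOf_massAbove_le_half_eq_Ici hf htop hbot,
    ← setOf_massBelow_le_half_eq_Iic hf htop hbot]
  ext t
  exact abs_massAbove_sub_massBelow_le_iff hf t

theorem balancedSet_nonempty [IsFiniteMeasure μ] [NeZero μ] (hf : Measurable f)
    (htop : μ {x | f x = ⊤} = 0) (hbot : μ {x | f x = ⊥} = 0) :
    (balancedSet μ f).Nonempty := by
  rw [balancedSet_eq_Icc hf htop hbot, nonempty_Icc]
  by_contra! h
  obtain ⟨t, hlt, hgt⟩ := exists_between h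
  have habove : ¬ massAbove μ f t ≤ μ.real univ / 2 := fun h ↦
    hgt.not_ge ((Set.ext_iff.1 (setOf_massAbove_le_half_eq_Ici hf htop hbot) t).1 h)
  have hbelow : ¬ massBelow μ f t ≤ μ.real univ / 2 := fun h ↦
    hlt.not_ge ((Set.ext_iff.1 (setOf_massBelow_le_half_eq_Iic hf htop hbot) t).1 h)
  linarith [massBelow_add_massAt_add_massAbove (μ := μ) hf t, massAt_nonneg (μ := μ) (f := f) t]

end

lemma measure_sep_eq_restrict {α : Type*} [MeasurableSpace α] (μ : Measure α) {s : Set α}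
    (hs : MeasurableSet s) (p : α → Prop) :
    μ {x | x ∈ s ∧ p x} = μ.restrict s {x | p x} := by
  rw [Measure.restrict_apply' hs, inter_comm]
  rfl

theorem stmt6 (a b : ℝ) (hab : a < b) (f : ℝ → EReal) (hmeas : Measurable f)
    (hfin : volume {x | x ∈ Set.Icc a b ∧ (f x = ⊤ ∨ f x = ⊥)} = 0) :
    Bset a b f
        = Set.Icc (sInf {t : ℝ | (a + b) / 2 ≤ ell a b f t})
            (sSup {t : ℝ | ell a b f t ≤ (a + b) / 2}) ∧
      (Bset a b f).Nonempty ∧ IsCompact (Bset a b f) := by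
  set μ := volume.restrict (Icc a b)
  have hμ : μ.real univ = b - a := by simp [μ, hab.le]
  have : NeZero μ := ⟨fun h ↦ by simp only [h, measureReal_zero, Pi.zero_apply] at hμ; linarith⟩
  have hnull : ∀ p : EReal → Prop, (∀ y, p y → y = ⊤ ∨ y = ⊥) → μ {x | p (f x)} = 0 :=
    fun p hp ↦ by
      rw [← measure_sep_eq_restrict _ measurableSet_Icc]
      refine measure_mono_null ?_ hfin
      rintro x ⟨hx, hpx⟩
      exact ⟨hx, hp _ hpx⟩
  have htop := hnull (· = ⊤) fun y ↦ Or.inl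
  have hbot := hnull (· = ⊥) fun y ↦ Or.inr
  have hB : Bset a b f = balancedSet μ f := by
    simp only [Bset, balancedSet, massAbove, massBelow, massAt, Measure.real,
      measure_sep_eq_restrict _ measurableSet_Icc, μ]
  have hell : ∀ t, ell a b f t = (a + b + massBelow μ f t - massAbove μ f t) / 2 := fun t ↦ by
    simp only [ell, massAbove, massBelow, Measure.real,
      measure_sep_eq_restrict _ measurableSet_Icc, μ]
  have hup : {t | (a + b) / 2 ≤ ell a b f t} = {t | massAbove μ f t ≤ massBelow μ f t} := by
    ext t; simp only [mem_ofPred_eq]; rw [hell]; constructor <;> intro h <;> linarith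
  have hdown : {t | ell a b f t ≤ (a + b) / 2} = {t | massBelow μ f t ≤ massAbove μ f t} := by
    ext t; simp only [mem_ofPred_eq]; rw [hell]; constructor <;> intro h <;> linarith
  have hIcc := balancedSet_eq_Icc hmeas htop hbot
  rw [hB, hup, hdown]
  exact ⟨hIcc, balancedSet_nonempty hmeas htop hbot, hIcc ▸ isCompact_Icc⟩
end

section
/- Let I ⊂ ℝ be a bounded closed nondegenerate interval, f : I → ℝ∪{±∞} non-decreasing with f ∈ L^r(I) for some r ≥ 1, and let a < b be real numbers. Define ψ(ξ) = ‖f − (a·1_{[min I, ξ)} + b·1_{[ξ, max I]})‖_r for ξ ∈ I. Then ψ(ξ) is minimal over ξ ∈ I if and only if ξ ∈ Q_{(a+b)/2}^f. -/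
open Set MeasureTheory

/-! With `h = |f - a|^r - |f - b|^r`, the `r`-th power of `ψ(η)` is a constant plus
`F(η) = ∫_α^η h`. As `f` is monotone, `h < 0` left of the lower end of `Q_{(a+b)/2}^f`,
`h = 0` inside it and `h > 0` right of its upper end, so `F` strictly decreases, is constant,
then strictly increases, and its minimizers on `I` are exactly `Q_{(a+b)/2}^f`. -/

/-- The quantile set `Q_c^f` of a real function `f` on `[α,β] ⊆ ℝ`, with the conventions
`inf ∅ = max I` and `sup ∅ = min I`. -/
noncomputable def QsetR (α β : ℝ) (f : ℝ → ℝ) (c : ℝ) : Set ℝ :=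
  Set.Icc (sInf ({x | x ∈ Set.Icc α β ∧ c ≤ f x} ∪ {β}))
          (sSup ({x | x ∈ Set.Icc α β ∧ f x ≤ c} ∪ {α}))

section Midpoint

variable {a b t r : ℝ}

lemma abs_sub_rpow_lt_of_lt_midpoint (hr : 0 < r) (hab : a < b) (ht : t < (a + b) / 2) :
    |t - a| ^ r < |t - b| ^ r := by
  rw [Real.rpow_lt_rpow_iff (abs_nonneg _) (abs_nonneg _) hr, ← sq_lt_sq]
  nlinarith

lemma abs_sub_rpow_lt_of_midpoint_lt (hr : 0 < r) (hab : a < b) (ht : (a + b) / 2 < t) :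
    |t - b| ^ r < |t - a| ^ r := by
  rw [Real.rpow_lt_rpow_iff (abs_nonneg _) (abs_nonneg _) hr, ← sq_lt_sq]
  nlinarith

lemma abs_midpoint_sub_rpow (a b r : ℝ) : |(a + b) / 2 - a| ^ r = |(a + b) / 2 - b| ^ r := by
  rw [← abs_neg ((a + b) / 2 - b)]
  ring_nf

end Midpoint

section Quantile

variable {α β c x : ℝ} {f : ℝ → ℝ}

noncomputable def quantileInf (α β : ℝ) (f : ℝ → ℝ) (c : ℝ) : ℝ :=
  sInf ({x | x ∈ Icc α β ∧ c ≤ f x} ∪ {β})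

noncomputable def quantileSup (α β : ℝ) (f : ℝ → ℝ) (c : ℝ) : ℝ :=
  sSup ({x | x ∈ Icc α β ∧ f x ≤ c} ∪ {α})

lemma QsetR_eq_Icc (α β : ℝ) (f : ℝ → ℝ) (c : ℝ) :
    QsetR α β f c = Icc (quantileInf α β f c) (quantileSup α β f c) :=
  rfl

lemma bddBelow_quantileInf_set :
    BddBelow ({x | x ∈ Icc α β ∧ c ≤ f x} ∪ {β}) :=
  ⟨min α β, by rintro x (hx | rfl) <;> simp_all⟩

lemma bddAbove_quantileSup_set :
    BddAbove ({x | x ∈ Icc α β ∧ f x ≤ c} ∪ {α}) :=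
  ⟨max α β, by rintro x (hx | rfl) <;> simp_all⟩

lemma quantileInf_mem_Icc (hαβ : α ≤ β) : quantileInf α β f c ∈ Icc α β :=
  ⟨le_csInf ⟨β, Or.inr rfl⟩ (by rintro x (hx | rfl); exacts [hx.1.1, hαβ]),
    csInf_le bddBelow_quantileInf_set (Or.inr rfl)⟩

lemma quantileSup_mem_Icc (hαβ : α ≤ β) : quantileSup α β f c ∈ Icc α β :=
  ⟨le_csSup bddAbove_quantileSup_set (Or.inr rfl),
    csSup_le ⟨α, Or.inr rfl⟩ (by rintro x (hx | rfl); exacts [hx.1.2, hαβ])⟩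

lemma lt_of_lt_quantileInf (hx : x ∈ Icc α β) (hxs : x < quantileInf α β f c) : f x < c := by
  by_contra! hcx
  exact (csInf_le bddBelow_quantileInf_set (Or.inl ⟨hx, hcx⟩)).not_gt hxs

lemma lt_of_quantileSup_lt (hx : x ∈ Icc α β) (hSx : quantileSup α β f c < x) : c < f x := by
  by_contra! hxc
  exact (le_csSup bddAbove_quantileSup_set (Or.inl ⟨hx, hxc⟩)).not_gt hSx

lemma le_of_quantileInf_lt (hf : MonotoneOn f (Icc α β)) (hx : x ∈ Icc α β)
    (hsx : quantileInf α β f c < x) : c ≤ f x := by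
  obtain ⟨y, hy | rfl, hyx⟩ := exists_lt_of_csInf_lt ⟨β, Or.inr rfl⟩ hsx
  · exact hy.2.trans (hf hy.1 hx hyx.le)
  · exact absurd hx.2 hyx.not_ge

lemma le_of_lt_quantileSup (hf : MonotoneOn f (Icc α β)) (hx : x ∈ Icc α β)
    (hxS : x < quantileSup α β f c) : f x ≤ c := by
  obtain ⟨y, hy | rfl, hxy⟩ := exists_lt_of_lt_csSup ⟨α, Or.inr rfl⟩ hxS
  · exact (hf hx hy.1 hxy.le).trans hy.2
  · exact absurd hx.1 hxy.not_ge

end Quantile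

section Primitive

variable {h : ℝ → ℝ} {α β u v : ℝ}

lemma intervalIntegral_sub_intervalIntegral_of_mem_Icc (hh : IntegrableOn h (Icc α β))
    {θ η : ℝ} (hθ : θ ∈ Icc α β) (hη : η ∈ Icc α β) :
    (∫ x in α..η, h x) - ∫ x in α..θ, h x = ∫ x in θ..η, h x :=
  have hα : α ∈ Icc α β := ⟨le_rfl, hθ.1.trans hθ.2⟩
  intervalIntegral.integral_interval_sub_left
    ((hh.mono_set (uIcc_subset_Icc hα hη)).intervalIntegrable)
    ((hh.mono_set (uIcc_subset_Icc hα hθ)).intervalIntegrable)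

lemma strictMonoOn_intervalIntegral_of_pos (hh : IntegrableOn h (Icc α β))
    (huv : Icc u v ⊆ Icc α β) (hpos : ∀ x ∈ Ioo u v, 0 < h x) :
    StrictMonoOn (fun η => ∫ x in α..η, h x) (Icc u v) := by
  intro θ hθ η hη hθη
  have hpos' : 0 < ∫ x in θ..η, h x :=
    intervalIntegral.intervalIntegral_pos_of_pos_on
      (hh.mono_set ((uIcc_subset_Icc hθ hη).trans huv)).intervalIntegrable
      (fun x hx => hpos x ⟨hθ.1.trans_lt hx.1, hx.2.trans_le hη.2⟩) hθη
  rw [← intervalIntegral_sub_intervalIntegral_of_mem_Icc hh (huv hθ) (huv hη)] at hpos'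
  exact sub_pos.1 hpos'

lemma strictAntiOn_intervalIntegral_of_neg (hh : IntegrableOn h (Icc α β))
    (huv : Icc u v ⊆ Icc α β) (hneg : ∀ x ∈ Ioo u v, h x < 0) :
    StrictAntiOn (fun η => ∫ x in α..η, h x) (Icc u v) := by
  have := strictMonoOn_intervalIntegral_of_pos (h := fun x => -h x) hh.neg huv
    (fun x hx => neg_pos.2 (hneg x hx))
  simpa only [intervalIntegral.integral_neg, neg_neg] using this.neg

lemma intervalIntegral_eq_of_eq_zero (hh : IntegrableOn h (Icc α β))
    (huv : Icc u v ⊆ Icc α β) (hzero : ∀ x ∈ Ioo u v, h x = 0) :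
    ∀ η ∈ Icc u v, ∫ x in α..η, h x = ∫ x in α..u, h x := by
  intro η hη
  rw [← sub_eq_zero, intervalIntegral_sub_intervalIntegral_of_mem_Icc hh
    (huv (left_mem_Icc.2 (hη.1.trans hη.2))) (huv hη), intervalIntegral.integral_of_le hη.1,
    integral_Ioc_eq_integral_Ioo]
  exact setIntegral_eq_zero_of_forall_eq_zero
    fun x hx => hzero x ⟨hx.1, hx.2.trans_le hη.2⟩

end Primitive

lemma isMinOn_Icc_iff_mem_Icc {X Y : Type*} [LinearOrder X] [Preorder Y] {F : X → Y}
    {α β s S ξ : X} (hs : s ∈ Icc α β) (hS : S ∈ Icc α β) (hanti : StrictAntiOn F (Icc α s))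
    (hconst : ∀ x ∈ Icc s S, F x = F s) (hmono : StrictMonoOn F (Icc S β))
    (hξ : ξ ∈ Icc α β) :
    IsMinOn F (Icc α β) ξ ↔ ξ ∈ Icc s S := by
  refine ⟨fun hmin => ⟨?_, ?_⟩, fun hξsS η hη => ?_⟩
  · by_contra! hξs
    exact (hanti ⟨hξ.1, hξs.le⟩ (right_mem_Icc.2 hs.1) hξs).not_ge (hmin hs)
  · by_contra! hSξ
    exact (hmono (left_mem_Icc.2 hS.2) ⟨hSξ.le, hξ.2⟩ hSξ).not_ge (hmin hS)
  rw [hconst ξ hξsS]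
  rcases lt_or_ge η s with hηs | hsη
  · exact (hanti ⟨hη.1, hηs.le⟩ (right_mem_Icc.2 hs.1) hηs).le
  rcases le_or_gt η S with hηS | hSη
  · exact (hconst η ⟨hsη, hηS⟩).ge
  · rw [← hconst S (right_mem_Icc.2 (hξsS.1.trans hξsS.2))]
    exact (hmono (left_mem_Icc.2 hS.2) ⟨hSη.le, hη.2⟩ hSη).le

lemma eLpNorm_le_eLpNorm_iff_integral_norm_rpow_le {X E : Type*} [MeasurableSpace X]
    [NormedAddCommGroup E] {μ : Measure X} {r : ℝ} (hr : 0 < r) {g g' : X → E}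
    (hg : MemLp g (ENNReal.ofReal r) μ) (hg' : MemLp g' (ENNReal.ofReal r) μ) :
    eLpNorm g (ENNReal.ofReal r) μ ≤ eLpNorm g' (ENNReal.ofReal r) μ ↔
      ∫ x, ‖g x‖ ^ r ∂μ ≤ ∫ x, ‖g' x‖ ^ r ∂μ := by
  have hp : ENNReal.ofReal r ≠ 0 := ENNReal.ofReal_ne_zero_iff.2 hr
  have hnonneg (g : X → E) : 0 ≤ ∫ x, ‖g x‖ ^ r ∂μ := integral_nonneg fun x => by positivity
  rw [hg.eLpNorm_eq_integral_rpow_norm hp ENNReal.ofReal_ne_top,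
    hg'.eLpNorm_eq_integral_rpow_norm hp ENNReal.ofReal_ne_top, ENNReal.toReal_ofReal hr.le,
    ENNReal.ofReal_le_ofReal_iff (by positivity),
    Real.rpow_le_rpow_iff (hnonneg g) (hnonneg g') (inv_pos.2 hr)]

lemma memLp_ite_lt_const {μ : Measure ℝ} [IsFiniteMeasure μ] {p : ENNReal} (η a b : ℝ) :
    MemLp (fun x => if x < η then a else b) p μ :=
  MemLp.of_bound
    (Measurable.ite measurableSet_Iio measurable_const measurable_const).aestronglyMeasurable
    (max |a| |b|) (Filter.Eventually.of_forall fun x => by split_ifs <;> simp)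

lemma setIntegral_Icc_ite_lt {u v : ℝ → ℝ} {α β η : ℝ} (hu : IntegrableOn u (Icc α β))
    (hv : IntegrableOn v (Icc α β)) (hη : η ∈ Icc α β) :
    ∫ x in Icc α β, (if x < η then u x else v x) =
      (∫ x in Icc α β, v x) + ∫ x in α..η, (u x - v x) := by
  have hsplit : (fun x => if x < η then u x else v x) =
      fun x => v x + (Iio η).indicator (u - v) x := by
    ext x
    by_cases hx : x < η <;> simp [hx]
  have hset : Iio η ∩ Icc α β = Ico α η := by
    ext x
    simp only [mem_inter_iff, mem_Iio, mem_Icc, mem_Ico]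
    exact ⟨fun hx => ⟨hx.2.1, hx.1⟩, fun hx => ⟨hx.2, hx.1, hx.2.le.trans hη.2⟩⟩
  rw [hsplit, integral_add hv ((hu.sub hv).indicator measurableSet_Iio),
    integral_indicator measurableSet_Iio, Measure.restrict_restrict measurableSet_Iio, hset,
    intervalIntegral.integral_of_le hη.1, integral_Ioc_eq_integral_Ioo,
    ← integral_Ico_eq_integral_Ioo]
  rfl

section StepApproximation

variable {α β r a b : ℝ} {f : ℝ → ℝ}

lemma integrableOn_abs_sub_rpow (hr : 0 < r)
    (hf : MemLp f (ENNReal.ofReal r) (volume.restrict (Icc α β))) (d : ℝ) :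
    IntegrableOn (fun x => |f x - d| ^ r) (Icc α β) := by
  have := (hf.sub (memLp_const d)).integrable_norm_rpow (ENNReal.ofReal_ne_zero_iff.2 hr)
    ENNReal.ofReal_ne_top
  simp only [ENNReal.toReal_ofReal hr.le, Pi.sub_apply, Real.norm_eq_abs] at this
  exact this

lemma eLpNorm_sub_ite_le_iff (hr : 0 < r)
    (hf : MemLp f (ENNReal.ofReal r) (volume.restrict (Icc α β))) {ξ η : ℝ}
    (hξ : ξ ∈ Icc α β) (hη : η ∈ Icc α β) :
    eLpNorm (fun x => f x - (if x < ξ then a else b)) (ENNReal.ofReal r)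
        (volume.restrict (Icc α β))
      ≤ eLpNorm (fun x => f x - (if x < η then a else b)) (ENNReal.ofReal r)
        (volume.restrict (Icc α β)) ↔
      ∫ x in α..ξ, (|f x - a| ^ r - |f x - b| ^ r) ≤
        ∫ x in α..η, (|f x - a| ^ r - |f x - b| ^ r) := by
  have hstep (θ x : ℝ) : ‖f x - (if x < θ then a else b)‖ ^ r =
      if x < θ then |f x - a| ^ r else |f x - b| ^ r := by
    split_ifs <;> rfl
  refine (eLpNorm_le_eLpNorm_iff_integral_norm_rpow_le hr (hf.sub (memLp_ite_lt_const ξ a b))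
    (hf.sub (memLp_ite_lt_const η a b))).trans ?_
  simp only [Pi.sub_apply, hstep]
  have hu := integrableOn_abs_sub_rpow hr hf a
  have hv := integrableOn_abs_sub_rpow hr hf b
  rw [setIntegral_Icc_ite_lt hu hv hξ, setIntegral_Icc_ite_lt hu hv hη, add_le_add_iff_left]

end StepApproximation

theorem stmt8_general (α β : ℝ) (f : ℝ → ℝ) (hf : MonotoneOn f (Set.Icc α β))
    (r : ℝ) (hr : 1 ≤ r)
    (hLr : MemLp f (ENNReal.ofReal r) (volume.restrict (Set.Icc α β)))
    (a b : ℝ) (hab : a < b) (ξ : ℝ) (hξ : ξ ∈ Set.Icc α β) :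
    (∀ η ∈ Set.Icc α β,
        eLpNorm (fun x => f x - (if x < ξ then a else b)) (ENNReal.ofReal r)
            (volume.restrict (Set.Icc α β))
          ≤ eLpNorm (fun x => f x - (if x < η then a else b)) (ENNReal.ofReal r)
            (volume.restrict (Set.Icc α β)))
      ↔ ξ ∈ QsetR α β f ((a + b) / 2) := by
  have hr0 : 0 < r := one_pos.trans_le hr
  have hαβ : α ≤ β := hξ.1.trans hξ.2
  set h : ℝ → ℝ := fun x => |f x - a| ^ r - |f x - b| ^ r
  have hh : IntegrableOn h (Icc α β) :=
    (integrableOn_abs_sub_rpow hr0 hLr a).sub (integrableOn_abs_sub_rpow hr0 hLr b)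
  rw [forall₂_congr fun η (hη : η ∈ Icc α β) => eLpNorm_sub_ite_le_iff hr0 hLr hξ hη,
    ← isMinOn_iff (f := fun η => ∫ x in α..η, h x), QsetR_eq_Icc]
  have hs := quantileInf_mem_Icc (f := f) (c := (a + b) / 2) hαβ
  have hS := quantileSup_mem_Icc (f := f) (c := (a + b) / 2) hαβ
  refine isMinOn_Icc_iff_mem_Icc hs hS ?_ ?_ ?_ hξ
  · refine strictAntiOn_intervalIntegral_of_neg hh (Icc_subset_Icc_right hs.2) fun x hx => ?_
    have hxI : x ∈ Icc α β := ⟨hx.1.le, hx.2.le.trans hs.2⟩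
    exact sub_neg.2 (abs_sub_rpow_lt_of_lt_midpoint hr0 hab (lt_of_lt_quantileInf hxI hx.2))
  · refine intervalIntegral_eq_of_eq_zero hh (Icc_subset_Icc hs.1 hS.2) fun x hx => ?_
    have hxI : x ∈ Icc α β := ⟨hs.1.trans hx.1.le, hx.2.le.trans hS.2⟩
    have hfx : f x = (a + b) / 2 :=
      (le_of_lt_quantileSup hf hxI hx.2).antisymm (le_of_quantileInf_lt hf hxI hx.1)
    exact sub_eq_zero.2 (hfx ▸ abs_midpoint_sub_rpow a b r)
  · refine strictMonoOn_intervalIntegral_of_pos hh (Icc_subset_Icc_left hS.1) fun x hx => ?_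
    have hxI : x ∈ Icc α β := ⟨hS.1.trans hx.1.le, hx.2.le⟩
    exact sub_pos.2 (abs_sub_rpow_lt_of_midpoint_lt hr0 hab (lt_of_quantileSup_lt hxI hx.1))

theorem stmt8 (α β : ℝ) (hαβ : α < β) (f : ℝ → ℝ) (hf : MonotoneOn f (Set.Icc α β))
    (r : ℝ) (hr : 1 ≤ r)
    (hLr : MemLp f (ENNReal.ofReal r) (volume.restrict (Set.Icc α β)))
    (a b : ℝ) (hab : a < b) (ξ : ℝ) (hξ : ξ ∈ Set.Icc α β) :
    (∀ η ∈ Set.Icc α β,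
        eLpNorm (fun x => f x - (if x < ξ then a else b)) (ENNReal.ofReal r)
            (volume.restrict (Set.Icc α β))
          ≤ eLpNorm (fun x => f x - (if x < η then a else b)) (ENNReal.ofReal r)
            (volume.restrict (Set.Icc α β)))
      ↔ ξ ∈ QsetR α β f ((a + b) / 2) :=
  stmt8_general α β f hf r hr hLr a b hab ξ hξ
end

section
/- Let I ⊂ ℝ be a bounded closed nondegenerate interval and f ∈ L^1(I). Then t ∈ ℝ minimizes t ↦ ‖f − t‖_1 if and only if t belongs to the set B^f of balanced values of f, i.e., if and only if |λ({f > t}) − λ({f < t})| ≤ λ({f = t}). -/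
/-!
Write `F s = ∫ |f - s| dμ`. For `t < s` the difference `|y - s| - |y - t|` equals `s - t` when
`y ≤ t` and is at least `-(s - t)` always, so `F s - F t ≥ (s - t) (μ{f ≤ t} - μ{f > t})`:
no `s > t` beats `t` once `μ{f > t} ≤ μ{f ≤ t}`. Applied to `-f`, the same bound gives
`F s - F t ≤ (s - t) (μ{f < s} - μ{f ≥ s})`, so if no `s > t` beats `t` then
`μ{f ≥ s} ≤ μ{f < s}` for all `s > t`, and letting `s ↓ t` gives `μ{f > t} ≤ μ{f ≤ t}`.
Together with the mirror statement for `s < t` this says exactly that `t` is balanced.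
-/

open Set MeasureTheory Filter Topology

variable {α : Type*} [MeasurableSpace α] {μ : Measure α}

lemma integral_abs_neg_sub (f : α → ℝ) (s : ℝ) :
    ∫ x, |-f x - s| ∂μ = ∫ x, |f x - -s| ∂μ := by
  simp_rw [show ∀ x, -f x - s = -(f x - -s) by intro; ring, abs_neg]

section Median

variable [IsFiniteMeasure μ] {f : α → ℝ}

lemma mul_measureReal_sub_le_integral {g : α → ℝ} (hg : Integrable g μ) {S : Set α}
    (hS : NullMeasurableSet S μ) {c : ℝ} (hin : ∀ x ∈ S, c ≤ g x) (hout : ∀ x ∉ S, -c ≤ g x) :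
    c * (μ.real S - μ.real Sᶜ) ≤ ∫ x, g x ∂μ :=
  calc c * (μ.real S - μ.real Sᶜ) = ∫ _ in S, c ∂μ + ∫ _ in Sᶜ, -c ∂μ := by
        simp only [setIntegral_const, smul_eq_mul]; ring
    _ ≤ ∫ x in S, g x ∂μ + ∫ x in Sᶜ, g x ∂μ :=
        add_le_add (setIntegral_mono_on₀ integrableOn_const hg.integrableOn hS hin)
          (setIntegral_mono_on₀ integrableOn_const hg.integrableOn hS.compl hout)
    _ = ∫ x, g x ∂μ := integral_add_compl₀ hS hg

lemma abs_sub_sub_abs_sub_of_le {y t s : ℝ} (hy : y ≤ t) (hts : t ≤ s) :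
    |y - s| - |y - t| = s - t := by
  rw [abs_of_nonpos (by linarith), abs_of_nonpos (by linarith)]; ring

lemma neg_le_abs_sub_sub_abs_sub (y t s : ℝ) (hts : t ≤ s) : -(s - t) ≤ |y - s| - |y - t| := by
  have := abs_sub_abs_le_abs_sub (y - t) (y - s)
  rw [sub_sub_sub_cancel_left, abs_of_nonneg (sub_nonneg.2 hts)] at this
  linarith

lemma mul_measureReal_sub_le_integral_abs_sub (hf : Integrable f μ) {t s : ℝ} (hts : t ≤ s) :
    (s - t) * (μ.real {x | f x ≤ t} - μ.real {x | t < f x})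
      ≤ ∫ x, |f x - s| ∂μ - ∫ x, |f x - t| ∂μ := by
  have hint (r : ℝ) : Integrable (fun x => |f x - r|) μ := (hf.sub (integrable_const r)).abs
  rw [← integral_sub (hint s) (hint t)]
  have hcompl : {x | f x ≤ t}ᶜ = {x | t < f x} := by ext; simp
  rw [← hcompl]
  exact mul_measureReal_sub_le_integral ((hint s).sub (hint t))
    (nullMeasurableSet_le hf.aemeasurable aemeasurable_const)
    (fun x hx => (abs_sub_sub_abs_sub_of_le hx hts).ge)
    (fun x _ => neg_le_abs_sub_sub_abs_sub (f x) t s hts)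

lemma integral_abs_sub_sub_le_mul_measureReal_sub (hf : Integrable f μ) {t s : ℝ} (hts : t ≤ s) :
    ∫ x, |f x - s| ∂μ - ∫ x, |f x - t| ∂μ
      ≤ (s - t) * (μ.real {x | f x < s} - μ.real {x | s ≤ f x}) := by
  have := mul_measureReal_sub_le_integral_abs_sub hf.neg (neg_le_neg hts)
  simp only [Pi.neg_apply, neg_le_neg_iff, neg_lt_neg_iff, integral_abs_neg_sub, neg_neg] at this
  linarith

lemma tendsto_measureReal_setOf_lt_nhdsGT (hf : AEMeasurable f μ) (t : ℝ) :
    Tendsto (fun s => μ.real {x | f x < s}) (𝓝[>] t) (𝓝 (μ.real {x | f x ≤ t})) := by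
  have hlim := tendsto_measure_biInter_gt (μ := μ) (s := fun r => {x | f x < r}) (a := t)
    (fun _ _ => nullMeasurableSet_lt hf aemeasurable_const)
    (fun _ _ _ hij _ hx => lt_of_lt_of_le hx hij) ⟨t + 1, by linarith, measure_ne_top _ _⟩
  have hinter : (⋂ r > t, {x | f x < r}) = {x | f x ≤ t} := by
    ext x
    simpa using ⟨le_of_forall_gt, fun h _ hr => h.trans_lt hr⟩
  rw [hinter] at hlim
  exact (ENNReal.tendsto_toReal (measure_ne_top _ _)).comp hlim

lemma measureReal_setOf_le_eq_add (hf : AEMeasurable f μ) (t : ℝ) :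
    μ.real {x | f x ≤ t} = μ.real {x | f x < t} + μ.real {x | f x = t} := by
  have hsplit : {x | f x ≤ t} = {x | f x < t} ∪ {x | f x = t} := by ext; simp [le_iff_lt_or_eq]
  have hdisj : Disjoint {x | f x < t} {x | f x = t} :=
    disjoint_left.2 fun _ hlt heq => (ne_of_lt hlt) heq
  rw [hsplit, measureReal_union₀ (nullMeasurableSet_eq_fun hf aemeasurable_const) hdisj.aedisjoint]

lemma measureReal_setOf_ge_eq_add (hf : AEMeasurable f μ) (t : ℝ) :
    μ.real {x | t ≤ f x} = μ.real {x | t < f x} + μ.real {x | f x = t} := by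
  simpa [neg_le_neg_iff, neg_lt_neg_iff, neg_inj] using measureReal_setOf_le_eq_add hf.neg (-t)

lemma forall_gt_integral_abs_sub_le_iff (hf : Integrable f μ) (t : ℝ) :
    (∀ s > t, ∫ x, |f x - t| ∂μ ≤ ∫ x, |f x - s| ∂μ) ↔
      μ.real {x | t < f x} ≤ μ.real {x | f x ≤ t} := by
  have hcompl (r : ℝ) : μ.real {x | r ≤ f x} = μ.real univ - μ.real {x | f x < r} := by
    have : {x | f x < r}ᶜ = {x | r ≤ f x} := by ext; simp
    rw [← this, measureReal_compl₀ (nullMeasurableSet_lt hf.aemeasurable aemeasurable_const)]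
  have hlt := tendsto_measureReal_setOf_lt_nhdsGT hf.aemeasurable t
  constructor
  · intro hmin
    have hmed : ∀ᶠ s in 𝓝[>] t, μ.real univ - μ.real {x | f x < s} ≤ μ.real {x | f x < s} := by
      filter_upwards [self_mem_nhdsWithin] with s (hs : t < s)
      have hupper := integral_abs_sub_sub_le_mul_measureReal_sub hf hs.le
      rw [hcompl] at hupper
      nlinarith [hmin s hs]
    have := le_of_tendsto_of_tendsto (tendsto_const_nhds.sub hlt) hlt hmed
    have hgt : {x | f x ≤ t}ᶜ = {x | t < f x} := by ext; simp
    rw [← hgt, measureReal_compl₀ (nullMeasurableSet_le hf.aemeasurable aemeasurable_const)]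
    linarith
  · intro hmed s hs
    have := mul_measureReal_sub_le_integral_abs_sub hf hs.le
    nlinarith [mul_nonneg (sub_nonneg.2 hs.le) (sub_nonneg.2 hmed)]

lemma forall_lt_integral_abs_sub_le_iff (hf : Integrable f μ) (t : ℝ) :
    (∀ s < t, ∫ x, |f x - t| ∂μ ≤ ∫ x, |f x - s| ∂μ) ↔
      μ.real {x | f x < t} ≤ μ.real {x | t ≤ f x} := by
  have hneg := forall_gt_integral_abs_sub_le_iff hf.neg (-t)
  simp only [Pi.neg_apply, neg_lt_neg_iff, neg_le_neg_iff, integral_abs_neg_sub, neg_neg] at hneg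
  rw [← hneg]
  exact ⟨fun h s hs => h (-s) (neg_lt.1 hs), fun h s hs => by simpa using h (-s) (neg_lt_neg hs)⟩

theorem forall_integral_abs_sub_le_iff (hf : Integrable f μ) (t : ℝ) :
    (∀ s, ∫ x, |f x - t| ∂μ ≤ ∫ x, |f x - s| ∂μ) ↔
      |μ.real {x | t < f x} - μ.real {x | f x < t}| ≤ μ.real {x | f x = t} := by
  have hsplit : (∀ s, ∫ x, |f x - t| ∂μ ≤ ∫ x, |f x - s| ∂μ) ↔
      (∀ s > t, ∫ x, |f x - t| ∂μ ≤ ∫ x, |f x - s| ∂μ) ∧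
        ∀ s < t, ∫ x, |f x - t| ∂μ ≤ ∫ x, |f x - s| ∂μ :=
    ⟨fun h => ⟨fun s _ => h s, fun s _ => h s⟩, fun ⟨hgt, hlt⟩ s =>
      (lt_trichotomy s t).elim (hlt s) fun h => h.elim (fun h => h ▸ le_rfl) (hgt s)⟩
  rw [hsplit, forall_gt_integral_abs_sub_le_iff hf, forall_lt_integral_abs_sub_le_iff hf,
    measureReal_setOf_le_eq_add hf.aemeasurable, measureReal_setOf_ge_eq_add hf.aemeasurable,
    abs_sub_le_iff]
  constructor <;> rintro ⟨h₁, h₂⟩ <;> constructor <;> linarith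

end Median

theorem stmt10_general (a b : ℝ) (f : ℝ → ℝ)
    (hf : Integrable f (volume.restrict (Set.Icc a b))) (t : ℝ) :
    (∀ s : ℝ,
        ∫ x in Set.Icc a b, |f x - t| ≤ ∫ x in Set.Icc a b, |f x - s|)
      ↔ |(volume {x | x ∈ Set.Icc a b ∧ t < f x}).toReal
            - (volume {x | x ∈ Set.Icc a b ∧ f x < t}).toReal|
          ≤ (volume {x | x ∈ Set.Icc a b ∧ f x = t}).toReal := by
  rw [forall_integral_abs_sub_le_iff hf t]
  simp only [Measure.real, Measure.restrict_apply' measurableSet_Icc, ofPred_and, ofPred_mem_eq,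
    inter_comm (Icc a b)]

theorem stmt10 (a b : ℝ) (hab : a < b) (f : ℝ → ℝ)
    (hf : Integrable f (volume.restrict (Set.Icc a b))) (t : ℝ) :
    (∀ s : ℝ,
        ∫ x in Set.Icc a b, |f x - t| ≤ ∫ x in Set.Icc a b, |f x - s|)
      ↔ |(volume {x | x ∈ Set.Icc a b ∧ t < f x}).toReal
            - (volume {x | x ∈ Set.Icc a b ∧ f x < t}).toReal|
          ≤ (volume {x | x ∈ Set.Icc a b ∧ f x = t}).toReal :=
  stmt10_general a b f hf t
end

section
/- Let I ⊂ ℝ be a bounded closed nondegenerate interval and f ∈ L^{r_0}(I) for some r_0 > 1. For 1 < r ≤ r_0 write τ_r^f for the unique minimizer of t ↦ ‖f − t‖_r. Then r ↦ τ_r^f is continuous on (1, r_0]. -/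
/-!
Minimizing `t ↦ ‖f - t‖ₛ` is the same as minimizing the absolute moment `∫ |f - t| ^ s`, which
is jointly continuous in `(s, t) ∈ (0, r₀] × ℝ` by dominated convergence and strictly convex in
`t` for `s > 1`. Minkowski's and Hölder's inequalities bound `|τ s|` by `2 ‖f‖_{r₀} |I| ^ (-1/r₀)`
uniformly in `s`, so `τ s` has cluster points as `s → r`; passing to the limit in
`∫ |f - τ s| ^ s ≤ ∫ |f - t| ^ s` shows that each of them minimizes `t ↦ ∫ |f - t| ^ r`, hence
equals `τ r`.
-/

open Set MeasureTheory Filter Topology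
open scoped ENNReal

lemma rpow_le_one_add_rpow {x y s r : ℝ} (hx : 0 ≤ x) (hxy : x ≤ y) (hs : 0 ≤ s)
    (hsr : s ≤ r) :
    x ^ s ≤ 1 + y ^ r := by
  rcases le_total x 1 with hx1 | hx1
  · linarith [Real.rpow_le_one hx hx1 hs, Real.rpow_nonneg (hx.trans hxy) r]
  · calc x ^ s ≤ x ^ r := Real.rpow_le_rpow_of_exponent_le hx1 hsr
      _ ≤ y ^ r := by gcongr; linarith
      _ ≤ 1 + y ^ r := le_add_of_nonneg_left zero_le_one

lemma strictConvexOn_abs_rpow {r : ℝ} (hr : 1 < r) :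
    StrictConvexOn ℝ univ fun x : ℝ ↦ |x| ^ r := by
  refine ⟨convex_univ, fun x _ y _ hxy p q hp hq hpq ↦ ?_⟩
  simp only [smul_eq_mul]
  rcases eq_or_ne |x| |y| with hxy' | hxy'
  · -- then `x = -y ≠ 0`, and cancellation in `p * x + q * y` makes the triangle inequality strict
    have hx : x = -y := (abs_eq_abs.mp hxy').resolve_left hxy
    have hy : 0 < |y| := abs_pos.mpr fun hy ↦ hxy (by simp [hx, hy])
    have hlt : |p * x + q * y| < |y| := by
      rw [hx, show p * -y + q * y = (q - p) * y by ring, abs_mul]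
      exact mul_lt_of_lt_one_left hy (abs_sub_lt_iff.mpr ⟨by linarith, by linarith⟩)
    calc |p * x + q * y| ^ r < |y| ^ r := by gcongr
      _ = p * |x| ^ r + q * |y| ^ r := by rw [hxy', ← add_mul, hpq, one_mul]
  · calc |p * x + q * y| ^ r ≤ (p * |x| + q * |y|) ^ r := by
          gcongr
          simpa [abs_mul, abs_of_pos hp, abs_of_pos hq] using abs_add_le (p * x) (q * y)
      _ < p * |x| ^ r + q * |y| ^ r := by
        simpa using (strictConvexOn_rpow hr).2 (abs_nonneg x) (abs_nonneg y) hxy' hp hq hpq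

lemma continuousWithinAt_of_isMinOn_of_unique {X Y β : Type*} [TopologicalSpace X]
    [TopologicalSpace Y] [TopologicalSpace β] [LinearOrder β] [OrderClosedTopology β]
    {F : X → Y → β} {τ : X → Y} {S : Set X} {K : Set Y} {x : X}
    (hF : ∀ y, ContinuousWithinAt (Function.uncurry F) (S ×ˢ univ) (x, y))
    (hmin : ∀ s ∈ S, IsMinOn (F s) univ (τ s)) (hK : IsCompact K) (hτK : MapsTo τ S K)
    (huniq : ∀ y, IsMinOn (F x) univ y → y = τ x) :
    ContinuousWithinAt τ S x := by
  refine hK.tendsto_nhds_of_unique_mapClusterPt (eventually_nhdsWithin_of_forall hτK)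
    fun y _ hy ↦ huniq y (isMinOn_univ_iff.mpr fun t ↦ ?_)
  obtain ⟨U, hUS, hτU⟩ := mapClusterPt_iff_ultrafilter.mp hy
  have hS : ∀ᶠ s in (U : Filter X), s ∈ S := hUS self_mem_nhdsWithin
  have hlim : ∀ {σ : X → Y} {z : Y}, Tendsto σ U (𝓝 z) →
      Tendsto (fun s ↦ F s (σ s)) U (𝓝 (F x z)) := fun hσ ↦
    (hF _).tendsto.comp (tendsto_nhdsWithin_iff.mpr
      ⟨(tendsto_id.mono_left (hUS.trans nhdsWithin_le_nhds)).prodMk_nhds hσ,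
        hS.mono fun s hs ↦ ⟨hs, trivial⟩⟩)
  exact le_of_tendsto_of_tendsto (hlim hτU) (hlim tendsto_const_nhds)
    (hS.mono fun s hs ↦ hmin s hs trivial)

section Measure

variable {α : Type*} [MeasurableSpace α] {μ : Measure α}

lemma integral_lt_integral_of_forall_lt [NeZero μ] {f g : α → ℝ} (hf : Integrable f μ)
    (hg : Integrable g μ) (hfg : ∀ x, f x < g x) :
    ∫ x, f x ∂μ < ∫ x, g x ∂μ := by
  have hsupp : (Function.support fun x ↦ g x - f x) = univ :=
    eq_univ_of_forall fun x ↦ sub_ne_zero.mpr (hfg x).ne'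
  rw [← sub_pos, ← integral_sub hg hf, integral_pos_iff_support_of_nonneg
    (fun x ↦ sub_nonneg.mpr (hfg x).le) (hg.sub hf), hsupp]
  exact Measure.measure_univ_pos.mpr (NeZero.ne μ)

variable {f : α → ℝ}

lemma enorm_le_of_eLpNorm_sub_const_le [IsFiniteMeasure μ] [NeZero μ] {p q : ℝ≥0∞}
    (hp : 1 ≤ p) (hpq : p ≤ q) (hf : AEStronglyMeasurable f μ) {c : ℝ}
    (hc : eLpNorm (fun x ↦ f x - c) p μ ≤ eLpNorm f p μ) :
    ‖c‖ₑ ≤ 2 * eLpNorm f q μ * μ univ ^ (-1 / q.toReal) := by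
  have hμ₀ : μ univ ≠ 0 := Measure.measure_univ_ne_zero.mpr (NeZero.ne μ)
  have hμ : μ univ ^ (1 / p.toReal) ≠ 0 :=
    (ENNReal.rpow_pos (pos_iff_ne_zero.mpr hμ₀) (by finiteness)).ne'
  rw [← ENNReal.mul_le_mul_iff_left hμ (by finiteness)]
  calc ‖c‖ₑ * μ univ ^ (1 / p.toReal) = eLpNorm (fun _ ↦ c) p μ :=
        (eLpNorm_const c (zero_lt_one.trans_le hp).ne' (NeZero.ne μ)).symm
    _ = eLpNorm (f - fun x ↦ f x - c) p μ := by congr; ext; simp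
    _ ≤ eLpNorm f p μ + eLpNorm (fun x ↦ f x - c) p μ :=
        eLpNorm_sub_le hf (hf.sub aestronglyMeasurable_const) hp
    _ ≤ 2 * eLpNorm f p μ := by rw [two_mul]; gcongr
    _ ≤ 2 * (eLpNorm f q μ * μ univ ^ (1 / p.toReal - 1 / q.toReal)) := by
        gcongr; exact eLpNorm_le_eLpNorm_mul_rpow_measure_univ hpq hf
    _ = 2 * eLpNorm f q μ * μ univ ^ (-1 / q.toReal) * μ univ ^ (1 / p.toReal) := by
        rw [sub_eq_neg_add, ENNReal.rpow_add _ _ hμ₀ (by finiteness), neg_div]; ring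

variable (μ f) in
noncomputable def absMoment (s t : ℝ) : ℝ :=
  ∫ x, |f x - t| ^ s ∂μ

variable {r₀ s : ℝ}

lemma MeasureTheory.MemLp.sub_const_of_le [IsFiniteMeasure μ]
    (hf : MemLp f (ENNReal.ofReal r₀) μ) (hsr : s ≤ r₀) (t : ℝ) :
    MemLp (fun x ↦ f x - t) (ENNReal.ofReal s) μ :=
  (hf.mono_exponent (ENNReal.ofReal_le_ofReal hsr)).sub (memLp_const t)

lemma MeasureTheory.MemLp.integrable_abs_sub_rpow [IsFiniteMeasure μ]
    (hf : MemLp f (ENNReal.ofReal r₀) μ) (hs : s ∈ Ioc 0 r₀) (t : ℝ) :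
    Integrable (fun x ↦ |f x - t| ^ s) μ := by
  simpa [ENNReal.toReal_ofReal hs.1.le] using
    (hf.sub_const_of_le hs.2 t).integrable_norm_rpow (by simpa using hs.1) ENNReal.ofReal_ne_top

lemma eLpNorm_sub_const_eq_ofReal_absMoment_rpow (hs : 0 < s) {t : ℝ}
    (ht : MemLp (fun x ↦ f x - t) (ENNReal.ofReal s) μ) :
    eLpNorm (fun x ↦ f x - t) (ENNReal.ofReal s) μ =
      ENNReal.ofReal (absMoment μ f s t ^ s⁻¹) := by
  simpa [ENNReal.toReal_ofReal hs.le, absMoment] using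
    ht.eLpNorm_eq_integral_rpow_norm (by simpa using hs) ENNReal.ofReal_ne_top

lemma absMoment_nonneg (s t : ℝ) : 0 ≤ absMoment μ f s t :=
  integral_nonneg fun _ ↦ by positivity

lemma absMoment_le_absMoment_iff_eLpNorm_le (hs : 0 < s) {c t : ℝ}
    (hc : MemLp (fun x ↦ f x - c) (ENNReal.ofReal s) μ)
    (ht : MemLp (fun x ↦ f x - t) (ENNReal.ofReal s) μ) :
    absMoment μ f s c ≤ absMoment μ f s t ↔
      eLpNorm (fun x ↦ f x - c) (ENNReal.ofReal s) μ ≤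
        eLpNorm (fun x ↦ f x - t) (ENNReal.ofReal s) μ := by
  rw [eLpNorm_sub_const_eq_ofReal_absMoment_rpow hs hc,
    eLpNorm_sub_const_eq_ofReal_absMoment_rpow hs ht,
    ENNReal.ofReal_le_ofReal_iff (Real.rpow_nonneg (absMoment_nonneg s t) _),
    Real.rpow_le_rpow_iff (absMoment_nonneg s c) (absMoment_nonneg s t) (inv_pos.mpr hs)]

lemma strictConvexOn_absMoment [NeZero μ] (hs : 1 < s)
    (hint : ∀ t, Integrable (fun x ↦ |f x - t| ^ s) μ) :
    StrictConvexOn ℝ univ (absMoment μ f s) := by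
  refine ⟨convex_univ, fun t₁ _ t₂ _ ht p q hp hq hpq ↦ ?_⟩
  have hpt : ∀ x,
      |f x - (p * t₁ + q * t₂)| ^ s < p * |f x - t₁| ^ s + q * |f x - t₂| ^ s := by
    intro x
    have h := (strictConvexOn_abs_rpow hs).2 (mem_univ (f x - t₁)) (mem_univ (f x - t₂))
      (by simpa using ht) hp hq hpq
    rwa [smul_eq_mul, smul_eq_mul, smul_eq_mul, smul_eq_mul,
      show p * (f x - t₁) + q * (f x - t₂) = f x - (p * t₁ + q * t₂) by
        linear_combination f x * hpq] at h
  have hlt := integral_lt_integral_of_forall_lt (hint _)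
    (g := fun x ↦ p * |f x - t₁| ^ s + q * |f x - t₂| ^ s)
    (((hint t₁).const_mul p).add ((hint t₂).const_mul q)) hpt
  rwa [integral_add ((hint t₁).const_mul p) ((hint t₂).const_mul q), integral_const_mul,
    integral_const_mul] at hlt

lemma continuousWithinAt_absMoment [IsFiniteMeasure μ] (hf : MemLp f (ENNReal.ofReal r₀) μ)
    {r : ℝ} (hr : r ∈ Ioc 0 r₀) (t₀ : ℝ) :
    ContinuousWithinAt (Function.uncurry (absMoment μ f)) (Ioc 0 r₀ ×ˢ univ) (r, t₀) := by
  have hbound : Integrable (fun x ↦ 1 + (|f x| + (|t₀| + 1)) ^ r₀) μ := by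
    have h := (hf.norm.add (memLp_const (|t₀| + 1))).integrable_norm_rpow
      (by simpa using hr.1.trans_le hr.2) ENNReal.ofReal_ne_top
    refine (integrable_const 1).add (h.congr (Eventually.of_forall fun x ↦ ?_))
    simp [ENNReal.toReal_ofReal (hr.1.le.trans hr.2),
      abs_of_nonneg (by positivity : 0 ≤ |f x| + (|t₀| + 1))]
  have hnear : ∀ᶠ p : ℝ × ℝ in 𝓝[Ioc 0 r₀ ×ˢ univ] (r, t₀),
      p.1 ∈ Ioc 0 r₀ ∧ |p.2 - t₀| < 1 := by
    refine (eventually_mem_nhdsWithin.and (nhdsWithin_le_nhds ?_)).mono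
      fun p hp ↦ ⟨hp.1.1, hp.2⟩
    exact (isOpen_lt (continuous_snd.sub continuous_const).abs continuous_const).mem_nhds (by simp)
  refine continuousWithinAt_of_dominated (hnear.mono fun p hp ↦
      (hf.integrable_abs_sub_rpow hp.1 p.2).aestronglyMeasurable)
    (hnear.mono fun p hp ↦ Eventually.of_forall fun x ↦ ?_) hbound
    (Eventually.of_forall fun x ↦ ?_)
  · rw [Real.norm_of_nonneg (by positivity)]
    refine rpow_le_one_add_rpow (abs_nonneg _) ?_ hp.1.1.le hp.1.2
    linarith [abs_sub (f x) p.2, abs_sub_abs_le_abs_sub p.2 t₀]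
  · exact ((continuousAt_const.sub continuousAt_snd).abs.rpow continuousAt_fst
      (Or.inr hr.1)).continuousWithinAt

end Measure

theorem stmt12_general (a b : ℝ) (hab : a < b) (f : ℝ → ℝ) (r₀ : ℝ)
    (hLr₀ : MemLp f (ENNReal.ofReal r₀) (volume.restrict (Set.Icc a b)))
    (τ : ℝ → ℝ)
    (hτ : ∀ r ∈ Set.Ioc 1 r₀, ∀ t : ℝ,
        eLpNorm (fun x => f x - τ r) (ENNReal.ofReal r) (volume.restrict (Set.Icc a b))
          ≤ eLpNorm (fun x => f x - t) (ENNReal.ofReal r) (volume.restrict (Set.Icc a b))) :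
    ContinuousOn τ (Set.Ioc 1 r₀) := by
  set μ := volume.restrict (Icc a b)
  have : NeZero μ := ⟨by simp [μ, hab]⟩
  have hexp : ∀ s ∈ Ioc 1 r₀, s ∈ Ioc 0 r₀ := fun s hs ↦ ⟨zero_lt_one.trans hs.1, hs.2⟩
  have hmin : ∀ s ∈ Ioc 1 r₀, IsMinOn (absMoment μ f s) univ (τ s) := fun s hs ↦
    isMinOn_univ_iff.mpr fun t ↦ (absMoment_le_absMoment_iff_eLpNorm_le (hexp s hs).1
      (hLr₀.sub_const_of_le hs.2 _) (hLr₀.sub_const_of_le hs.2 _)).mpr (hτ s hs t)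
  set C := 2 * eLpNorm f (ENNReal.ofReal r₀) μ * μ univ ^ (-1 / (ENNReal.ofReal r₀).toReal)
  have hC : C ≠ ∞ := ENNReal.mul_ne_top (ENNReal.mul_ne_top ENNReal.ofNat_ne_top hLr₀.2.ne)
    (ENNReal.rpow_ne_top_of_ne_zero (by simp [μ, hab]) (by finiteness))
  have hτC : MapsTo τ (Ioc 1 r₀) (Metric.closedBall 0 C.toReal) := fun s hs ↦ by
    have h := enorm_le_of_eLpNorm_sub_const_le (ENNReal.one_le_ofReal.mpr hs.1.le)
      (ENNReal.ofReal_le_ofReal hs.2) hLr₀.1 (by simpa using hτ s hs 0)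
    simpa using ENNReal.toReal_mono hC h
  intro r hr
  exact continuousWithinAt_of_isMinOn_of_unique
    (fun t ↦ (continuousWithinAt_absMoment hLr₀ (hexp r hr) t).mono
      (prod_mono (Ioc_subset_Ioc_left zero_le_one) subset_rfl))
    hmin (isCompact_closedBall 0 C.toReal) hτC fun t ht ↦
    (strictConvexOn_absMoment hr.1 (hLr₀.integrable_abs_sub_rpow (hexp r hr))).eq_of_isMinOn
      ht (hmin r hr) trivial trivial

theorem stmt12 (a b : ℝ) (hab : a < b) (f : ℝ → ℝ) (r₀ : ℝ) (hr₀ : 1 < r₀)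
    (hLr₀ : MemLp f (ENNReal.ofReal r₀) (volume.restrict (Set.Icc a b)))
    (τ : ℝ → ℝ)
    (hτ : ∀ r ∈ Set.Ioc 1 r₀, ∀ t : ℝ,
        eLpNorm (fun x => f x - τ r) (ENNReal.ofReal r) (volume.restrict (Set.Icc a b))
          ≤ eLpNorm (fun x => f x - t) (ENNReal.ofReal r) (volume.restrict (Set.Icc a b))) :
    ContinuousOn τ (Set.Ioc 1 r₀) :=
  stmt12_general a b hab f r₀ hLr₀ τ hτ
end

section
/- Let f, g ∈ L^r(I) for some 1 < r < ∞ on a bounded closed nondegenerate interval I with f ≤ g a.e. Then τ_r^f ≤ τ_r^g, with equality if and only if f = g almost everywhere, where τ_r^h denotes the unique minimizer of t ↦ ‖h − t‖_r. -/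
/-!
Write `ψ(v) = sign v · |v|^(r-1)`. Differentiating `t ↦ ∫ |h - t|^r` under the integral
sign shows that a minimizer `τ` of `‖h - t‖_r` satisfies `∫ ψ(h - τ) = 0`. Since `ψ` is
strictly increasing, `t ↦ ∫ ψ(h - t)` is strictly decreasing in `t` and monotone in `h`; so
`f ≤ g` forces `τ_f ≤ τ_g`, and when `τ_f = τ_g` the integral of `ψ(g - τ) - ψ(f - τ) ≥ 0`
vanishes, which makes `f = g` almost everywhere.
-/

open Set MeasureTheory

section SignedRpow

variable {r : ℝ}

/-- `sign v * |v| ^ (r - 1)`, written in the form in which it appears in `hasDerivAt_abs_rpow`. -/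
noncomputable def signedRpow (r v : ℝ) : ℝ := |v| ^ (r - 2) * v

lemma signedRpow_of_nonneg (hr : 1 < r) {v : ℝ} (hv : 0 ≤ v) :
    signedRpow r v = v ^ (r - 1) := by
  rw [signedRpow, abs_of_nonneg hv, ← Real.rpow_add_one' hv (by linarith)]
  ring_nf

lemma signedRpow_neg (r v : ℝ) : signedRpow r (-v) = -signedRpow r v := by
  simp [signedRpow]

lemma abs_signedRpow (hr : 1 < r) (v : ℝ) : |signedRpow r v| = |v| ^ (r - 1) := by
  rw [← signedRpow_of_nonneg hr (abs_nonneg v), signedRpow, signedRpow, abs_mul, abs_abs,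
    abs_of_nonneg (Real.rpow_nonneg (abs_nonneg v) _)]

lemma strictMono_signedRpow (hr : 1 < r) : StrictMono (signedRpow r) := by
  refine strictMono_of_odd_strictMonoOn_nonneg (signedRpow_neg r) fun u hu v hv huv => ?_
  rw [signedRpow_of_nonneg hr hu, signedRpow_of_nonneg hr hv]
  exact Real.rpow_lt_rpow hu huv (by linarith)

lemma measurable_signedRpow (r : ℝ) : Measurable (signedRpow r) := by
  unfold signedRpow; fun_prop

lemma hasDerivAt_abs_sub_rpow (hr : 1 < r) (u t : ℝ) :
    HasDerivAt (fun s => |u - s| ^ r) (-(r * signedRpow r (u - t))) t := by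
  have := (hasDerivAt_abs_rpow (u - t) hr).comp t ((hasDerivAt_id t).const_sub u)
  exact this.congr_deriv (by rw [signedRpow]; ring)

lemma rpow_sub_one_le_rpow_of_le (hr : 1 < r) {v w : ℝ} (hv : 0 ≤ v) (hvw : v ≤ w)
    (hw : 1 ≤ w) : v ^ (r - 1) ≤ w ^ r :=
  calc v ^ (r - 1) ≤ w ^ (r - 1) := Real.rpow_le_rpow hv hvw (by linarith)
    _ ≤ w ^ r := Real.rpow_le_rpow_of_exponent_le hw (by linarith)

end SignedRpow

section Integral

variable {r : ℝ} {α : Type*} [MeasurableSpace α] {μ : Measure α} [IsFiniteMeasure μ]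
  {h f g : α → ℝ}

lemma integrable_abs_sub_rpow (hr : 0 < r) (hL : MemLp h (ENNReal.ofReal r) μ) (t : ℝ) :
    Integrable (fun x => |h x - t| ^ r) μ := by
  simpa [ENNReal.toReal_ofReal hr.le] using
    (hL.sub (memLp_const t)).integrable_norm_rpow (by simpa using hr) ENNReal.ofReal_ne_top

lemma integrable_abs_sub_add_one_rpow (hr : 0 < r) (hL : MemLp h (ENNReal.ofReal r) μ)
    (t : ℝ) : Integrable (fun x => (|h x - t| + 1) ^ r) μ := by
  simpa [ENNReal.toReal_ofReal hr.le, abs_of_nonneg, add_nonneg] using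
    ((hL.sub (memLp_const t)).norm.add (memLp_const 1)).integrable_norm_rpow
      (by simpa using hr) ENNReal.ofReal_ne_top

lemma integrable_signedRpow_sub (hr : 1 < r) (hL : MemLp h (ENNReal.ofReal r) μ) (t : ℝ) :
    Integrable (fun x => signedRpow r (h x - t)) μ := by
  refine (integrable_abs_sub_add_one_rpow (by linarith) hL t).mono'
    ((measurable_signedRpow r).comp_aemeasurable
      (hL.sub (memLp_const t)).aestronglyMeasurable.aemeasurable).aestronglyMeasurable ?_
  filter_upwards with x
  rw [Real.norm_eq_abs, abs_signedRpow hr]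
  exact rpow_sub_one_le_rpow_of_le hr (abs_nonneg _) (by linarith)
    (by linarith [abs_nonneg (h x - t)])

lemma hasDerivAt_integral_abs_sub_rpow (hr : 1 < r) (hL : MemLp h (ENNReal.ofReal r) μ)
    (t₀ : ℝ) :
    HasDerivAt (fun t => ∫ x, |h x - t| ^ r ∂μ)
      (-(r * ∫ x, signedRpow r (h x - t₀) ∂μ)) t₀ := by
  have hderiv := (hasDerivAt_integral_of_dominated_loc_of_deriv_le
    (F := fun t x => |h x - t| ^ r) (F' := fun t x => -(r * signedRpow r (h x - t)))
    (bound := fun x => r * (|h x - t₀| + 1) ^ r) (Metric.ball_mem_nhds t₀ one_pos)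
    (.of_forall fun t => (integrable_abs_sub_rpow (by linarith) hL t).aestronglyMeasurable)
    (integrable_abs_sub_rpow (by linarith) hL t₀)
    ((integrable_signedRpow_sub hr hL t₀).const_mul r).neg.aestronglyMeasurable
    ?_ ((integrable_abs_sub_add_one_rpow (by linarith) hL t₀).const_mul r)
    (.of_forall fun x t _ => hasDerivAt_abs_sub_rpow hr (h x) t)).2
  · rwa [integral_neg, integral_const_mul] at hderiv
  · filter_upwards with x t ht
    rw [norm_neg, norm_mul, Real.norm_eq_abs, Real.norm_eq_abs, abs_signedRpow hr,
      abs_of_pos (by linarith)]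
    gcongr
    refine rpow_sub_one_le_rpow_of_le hr (abs_nonneg _) ?_ (by linarith [abs_nonneg (h x - t₀)])
    rw [Metric.mem_ball, Real.dist_eq] at ht
    calc |h x - t| ≤ |h x - t₀| + |t - t₀| := by
          simpa using abs_sub_le (h x) t₀ t |>.trans_eq (by rw [abs_sub_comm t₀])
      _ ≤ |h x - t₀| + 1 := by linarith

lemma integral_abs_sub_rpow_le_of_eLpNorm_le (hr : 0 < r)
    (hL : MemLp h (ENNReal.ofReal r) μ) {s t : ℝ}
    (hst : eLpNorm (fun x => h x - s) (ENNReal.ofReal r) μ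
      ≤ eLpNorm (fun x => h x - t) (ENNReal.ofReal r) μ) :
    ∫ x, |h x - s| ^ r ∂μ ≤ ∫ x, |h x - t| ^ r ∂μ := by
  have hp : ENNReal.ofReal r ≠ 0 := by simpa using hr
  have hLs : MemLp (fun x => h x - s) (ENNReal.ofReal r) μ := hL.sub (memLp_const s)
  have hLt : MemLp (fun x => h x - t) (ENNReal.ofReal r) μ := hL.sub (memLp_const t)
  rw [hLs.eLpNorm_eq_integral_rpow_norm hp ENNReal.ofReal_ne_top,
    hLt.eLpNorm_eq_integral_rpow_norm hp ENNReal.ofReal_ne_top,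
    ENNReal.ofReal_le_ofReal_iff (by positivity), ENNReal.toReal_ofReal hr.le] at hst
  simpa only [Real.norm_eq_abs] using (Real.rpow_le_rpow_iff (by positivity) (by positivity)
    (inv_pos.2 hr)).1 hst

lemma integral_signedRpow_sub_eq_zero (hr : 1 < r) (hL : MemLp h (ENNReal.ofReal r) μ)
    {τ : ℝ} (hτ : ∀ t, eLpNorm (fun x => h x - τ) (ENNReal.ofReal r) μ
      ≤ eLpNorm (fun x => h x - t) (ENNReal.ofReal r) μ) :
    ∫ x, signedRpow r (h x - τ) ∂μ = 0 := by
  have hmin : IsLocalMin (fun t => ∫ x, |h x - t| ^ r ∂μ) τ :=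
    .of_forall fun t => integral_abs_sub_rpow_le_of_eLpNorm_le (by linarith) hL (hτ t)
  have := hmin.hasDerivAt_eq_zero (hasDerivAt_integral_abs_sub_rpow hr hL τ)
  simpa [(by linarith : r ≠ 0)] using this

lemma integral_signedRpow_sub_mono (hr : 1 < r) (hLf : MemLp f (ENNReal.ofReal r) μ)
    (hLg : MemLp g (ENNReal.ofReal r) μ) (hfg : f ≤ᵐ[μ] g) (t : ℝ) :
    ∫ x, signedRpow r (f x - t) ∂μ ≤ ∫ x, signedRpow r (g x - t) ∂μ := by
  refine integral_mono_ae (integrable_signedRpow_sub hr hLf t)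
    (integrable_signedRpow_sub hr hLg t) ?_
  filter_upwards [hfg] with x hx
  exact (strictMono_signedRpow hr).monotone (by linarith)

lemma strictAnti_integral_signedRpow_sub [NeZero μ] (hr : 1 < r)
    (hL : MemLp h (ENNReal.ofReal r) μ) :
    StrictAnti fun t => ∫ x, signedRpow r (h x - t) ∂μ := by
  intro s t hst
  have hlt : ∀ x, signedRpow r (h x - t) < signedRpow r (h x - s) := fun x =>
    strictMono_signedRpow hr (by linarith)
  refine (integral_mono (integrable_signedRpow_sub hr hL t) (integrable_signedRpow_sub hr hL s)
    fun x => (hlt x).le).lt_of_ne fun heq => ?_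
  obtain ⟨x, hx⟩ := ((integral_eq_iff_of_ae_le (integrable_signedRpow_sub hr hL t)
    (integrable_signedRpow_sub hr hL s) (.of_forall fun x => (hlt x).le)).1 heq).exists
  exact (hlt x).ne hx

lemma ae_eq_of_integral_signedRpow_sub_eq (hr : 1 < r) (hLf : MemLp f (ENNReal.ofReal r) μ)
    (hLg : MemLp g (ENNReal.ofReal r) μ) (hfg : f ≤ᵐ[μ] g) {t : ℝ}
    (heq : ∫ x, signedRpow r (f x - t) ∂μ = ∫ x, signedRpow r (g x - t) ∂μ) :
    f =ᵐ[μ] g := by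
  have hle : (fun x => signedRpow r (f x - t)) ≤ᵐ[μ] fun x => signedRpow r (g x - t) := by
    filter_upwards [hfg] with x hx
    exact (strictMono_signedRpow hr).monotone (by linarith)
  have := (integral_eq_iff_of_ae_le (integrable_signedRpow_sub hr hLf t)
    (integrable_signedRpow_sub hr hLg t) hle).1 heq
  filter_upwards [this] with x hx
  simpa using (strictMono_signedRpow hr).injective hx

end Integral

theorem stmt13 (a b : ℝ) (hab : a < b) (f g : ℝ → ℝ) (r : ℝ) (hr : 1 < r)
    (hLf : MemLp f (ENNReal.ofReal r) (volume.restrict (Set.Icc a b)))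
    (hLg : MemLp g (ENNReal.ofReal r) (volume.restrict (Set.Icc a b)))
    (hfg : f ≤ᵐ[volume.restrict (Set.Icc a b)] g)
    (τf τg : ℝ)
    (hτf : ∀ t : ℝ,
        eLpNorm (fun x => f x - τf) (ENNReal.ofReal r) (volume.restrict (Set.Icc a b))
          ≤ eLpNorm (fun x => f x - t) (ENNReal.ofReal r) (volume.restrict (Set.Icc a b)))
    (hτg : ∀ t : ℝ,
        eLpNorm (fun x => g x - τg) (ENNReal.ofReal r) (volume.restrict (Set.Icc a b))
          ≤ eLpNorm (fun x => g x - t) (ENNReal.ofReal r) (volume.restrict (Set.Icc a b))) :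
    τf ≤ τg ∧ (τf = τg ↔ f =ᵐ[volume.restrict (Set.Icc a b)] g) := by
  have : NeZero (volume.restrict (Set.Icc a b)) :=
    ⟨by simpa [Measure.restrict_eq_zero] using hab⟩
  have hf0 := integral_signedRpow_sub_eq_zero hr hLf hτf
  have hg0 := integral_signedRpow_sub_eq_zero hr hLg hτg
  have hanti := strictAnti_integral_signedRpow_sub hr hLg
  have hle : τf ≤ τg := hanti.le_iff_ge.1 <|
    (hg0.trans hf0.symm).le.trans (integral_signedRpow_sub_mono hr hLf hLg hfg τf)
  refine ⟨hle, fun heq => ?_, fun hae => hanti.injective ?_⟩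
  · subst heq
    exact ae_eq_of_integral_signedRpow_sub_eq hr hLf hLg hfg (hf0.trans hg0.symm)
  · refine (integral_congr_ae ?_).trans (hf0.trans hg0.symm)
    filter_upwards [hae] with x hx
    rw [hx]
end

section
/- Let I ⊂ ℝ be a bounded closed nondegenerate interval and f ∈ ⋂_{r≥1} L^r(I). If f⁻ ∈ L^∞(I) or f⁺ ∈ L^∞(I), then lim_{r→∞} τ_r^f = ½(essinf_I f + esssup_I f), where τ_r^f is the unique minimizer of t ↦ ‖f − t‖_r for r > 1. -/
/-!
Fix an essential upper bound `A` of `f`, a level `B` with `μ {f < B} > 0`, and `t ≥ K`. Lowering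
`t` by a small `d > 0` changes `|f - t| ^ r` as follows: on `{f < B}` it drops by at least
`r d G ^ (r - 1)` with `G = K - B - d` (Bernoulli), and elsewhere it grows by at most `L ^ r` with
`L = max (A - K + d) 0`. When `K > max B ((A + B) / 2)` we may take `L < G`, and then
`(L / G) ^ r → 0` makes the gain win for large `r`: the minimiser `τ r` is eventually below `K`.
Applied to `-f` this gives the lower bound, and letting `A`, `B` approach `esssup f`, `essinf f`
yields the midrange.
-/

open Set MeasureTheory Filter Topology

namespace Real

theorem rpow_add_mul_rpow_sub_one_le_rpow_add {y d r : ℝ} (hy : 0 < y) (hd : 0 ≤ d) (hr : 1 ≤ r) :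
    y ^ r + r * d * y ^ (r - 1) ≤ (y + d) ^ r := by
  have hbern :=
    one_add_mul_self_le_rpow_one_add (s := d / y) (by linarith [div_nonneg hd hy.le]) hr
  calc y ^ r + r * d * y ^ (r - 1) = y ^ r * (1 + r * (d / y)) := by
        rw [rpow_sub_one hy.ne']; field_simp
    _ ≤ y ^ r * (1 + d / y) ^ r := by gcongr
    _ = (y + d) ^ r := by
        rw [← mul_rpow hy.le (by positivity)]; congr 1; field_simp

theorem abs_sub_rpow_le_abs_sub_add_rpow_add {u s d r : ℝ} (hd : 0 ≤ d) (hr : 0 ≤ r) :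
    |u - s| ^ r ≤ |u - (s + d)| ^ r + max (u - s) 0 ^ r := by
  rcases le_or_gt u s with hus | hsu
  · have : |u - s| ≤ |u - (s + d)| := by
      rw [abs_of_nonpos (by linarith), abs_of_nonpos (by linarith)]; linarith
    linarith [rpow_le_rpow (abs_nonneg _) this hr, rpow_nonneg (le_max_right (u - s) 0) r]
  · rw [abs_of_pos (sub_pos.2 hsu), max_eq_left (sub_pos.2 hsu).le]
    linarith [rpow_nonneg (abs_nonneg (u - (s + d))) r]

theorem eventually_rpow_mul_lt_rpow_mul {L G C c : ℝ} (hL : 0 ≤ L) (hLG : L < G) (hc : 0 < c) :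
    ∀ᶠ r : ℝ in atTop, L ^ r * C < G ^ r * c := by
  have hG : 0 < G := hL.trans_lt hLG
  have hq : Tendsto (fun r : ℝ => (L / G) ^ r * C) atTop (𝓝 0) := by
    simpa using (tendsto_rpow_atTop_of_base_lt_one _
      (by linarith [div_nonneg hL hG.le]) ((div_lt_one hG).2 hLG)).mul_const C
  filter_upwards [hq.eventually (eventually_lt_nhds hc)] with r hr
  calc L ^ r * C = G ^ r * ((L / G) ^ r * C) := by
        rw [div_rpow hL hG.le]; field_simp
    _ < G ^ r * c := by gcongr

end Real

namespace EReal

-- In `EReal`, `⊥ + ⊤ = ⊥`, so `(⊥ + ⊤) / 2 < K` holds for every `K`.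
theorem exists_bounds_of_add_div_two_lt {m M : EReal} {K : ℝ} (hmM : m ≤ M) (hM : M ≠ ⊥)
    (hbd : m ≠ ⊥ ∨ M ≠ ⊤) (hK : (m + M) / 2 < K) :
    ∃ A B : ℝ, M ≤ A ∧ m < B ∧ B < K ∧ A + B < 2 * K := by
  induction M using EReal.rec with
  | bot => exact absurd rfl hM
  | top =>
    have h2 : (⊤ : EReal) / 2 = ⊤ := top_div_of_pos_ne_top (by norm_num) (by decide)
    induction m using EReal.rec with
    | bot => simp at hbd
    | top => simp [h2] at hK
    | coe m => simp [h2] at hK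
  | coe A =>
    refine ⟨A, ?_⟩
    induction m using EReal.rec with
    | bot => exact ⟨min K (2 * K - A) - 1, le_rfl, bot_lt_coe _,
        by linarith [min_le_left K (2 * K - A)], by linarith [min_le_right K (2 * K - A)]⟩
    | top => simp at hmM
    | coe m =>
      have hmA : m ≤ A := by exact_mod_cast hmM
      have hK' : (m + A) / 2 < K := by
        rw [← EReal.coe_lt_coe_iff, coe_div, coe_add]; exact hK
      exact ⟨m + (2 * K - A - m) / 4, le_rfl, EReal.coe_lt_coe_iff.2 (by linarith), by linarith,
        by linarith⟩

theorem exists_bounds_of_lt_add_div_two {m M : EReal} {K : ℝ} (hmM : m ≤ M) (hm : m ≠ ⊤)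
    (hK : K < (m + M) / 2) :
    ∃ A B : ℝ, A ≤ m ∧ B < M ∧ K < B ∧ 2 * K < A + B := by
  induction m using EReal.rec with
  | top => exact absurd rfl hm
  | bot =>
    have h2 : (⊥ : EReal) / 2 = ⊥ := bot_div_of_pos_ne_top (by norm_num) (by decide)
    simp [h2] at hK
  | coe A =>
    refine ⟨A, ?_⟩
    induction M using EReal.rec with
    | bot => simp at hmM
    | top => exact ⟨max K (2 * K - A) + 1, le_rfl, coe_lt_top _,
        by linarith [le_max_left K (2 * K - A)], by linarith [le_max_right K (2 * K - A)]⟩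
    | coe M =>
      have hAM : A ≤ M := by exact_mod_cast hmM
      have hK' : K < (A + M) / 2 := by
        rw [← EReal.coe_lt_coe_iff, coe_div, coe_add]; exact hK
      exact ⟨M - (A + M - 2 * K) / 4, le_rfl, EReal.coe_lt_coe_iff.2 (by linarith), by linarith,
        by linarith⟩

end EReal

namespace MeasureTheory

variable {α E : Type*} [MeasurableSpace α] {μ : Measure α}

theorem eLpNorm_lt_eLpNorm_of_integral_rpow_lt [NormedAddCommGroup E] {g h : α → E} {r : ℝ}
    (hr : 0 < r) (hg : MemLp g (ENNReal.ofReal r) μ) (hh : MemLp h (ENNReal.ofReal r) μ)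
    (hlt : ∫ x, ‖g x‖ ^ r ∂μ < ∫ x, ‖h x‖ ^ r ∂μ) :
    eLpNorm g (ENNReal.ofReal r) μ < eLpNorm h (ENNReal.ofReal r) μ := by
  have hp : ENNReal.ofReal r ≠ 0 := ENNReal.ofReal_ne_zero_iff.2 hr
  rw [hg.eLpNorm_eq_integral_rpow_norm hp ENNReal.ofReal_ne_top,
    hh.eLpNorm_eq_integral_rpow_norm hp ENNReal.ofReal_ne_top, ENNReal.toReal_ofReal hr.le]
  have hg0 : 0 ≤ ∫ x, ‖g x‖ ^ r ∂μ := integral_nonneg fun x => by positivity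
  exact (ENNReal.ofReal_lt_ofReal_iff (Real.rpow_pos_of_pos (hg0.trans_lt hlt) _)).2
    (Real.rpow_lt_rpow hg0 hlt (inv_pos.2 hr))

variable {f : α → ℝ}

theorem essSup_coe_ne_top_of_memLp_top (hf : MemLp (fun x => max (f x) 0) ⊤ μ) :
    essSup (fun x => (f x : EReal)) μ ≠ ⊤ :=
  ne_top_of_le_ne_top (EReal.coe_ne_top (lpNorm (fun x => max (f x) 0) ⊤ μ)) <|
    essSup_le_of_ae_le _ <| (ae_le_lpNorm_exponent_top hf).mono fun x hx =>
      EReal.coe_le_coe_iff.2 <| (le_max_left _ _).trans <| (le_abs_self _).trans hx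

theorem essInf_coe_ne_bot_of_memLp_top (hf : MemLp (fun x => max (-f x) 0) ⊤ μ) :
    essInf (fun x => (f x : EReal)) μ ≠ ⊥ :=
  ne_bot_of_le_ne_bot (EReal.coe_ne_bot (-lpNorm (fun x => max (-f x) 0) ⊤ μ)) <|
    le_essInf_of_ae_le _ <| (ae_le_lpNorm_exponent_top hf).mono fun x hx =>
      EReal.coe_le_coe_iff.2 <| by
        rw [Real.norm_eq_abs] at hx
        linarith [le_max_left (-f x) 0, le_abs_self (max (-f x) 0)]

variable [IsFiniteMeasure μ]

theorem eventually_integral_abs_sub_rpow_lt (hf : ∀ r, 1 ≤ r → MemLp f (ENNReal.ofReal r) μ)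
    {A B K d : ℝ} (hA : ∀ᵐ x ∂μ, f x ≤ A) (hB : μ {x | f x < B} ≠ 0) (hd : 0 < d)
    (hBK : B + d < K) (hABK : A + B + 2 * d < 2 * K) :
    ∀ᶠ r : ℝ in atTop, ∀ t, K ≤ t → ∫ x, |f x - (t - d)| ^ r ∂μ < ∫ x, |f x - t| ^ r ∂μ := by
  set G := K - B - d
  set L := max (A - K + d) 0
  set S := {x | f x < B}
  have hG : 0 < G := by linarith
  have hLG : L < G := max_lt (by linarith) hG
  have hS : 0 < μ.real S := ENNReal.toReal_pos hB (measure_ne_top μ S)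
  have hSm : NullMeasurableSet S μ :=
    nullMeasurableSet_lt (hf 1 le_rfl).1.aemeasurable aemeasurable_const
  filter_upwards [Real.eventually_rpow_mul_lt_rpow_mul (C := μ.real univ) (le_max_right _ _) hLG
    (by positivity : 0 < d / G * μ.real S), eventually_ge_atTop 1] with r hasymp hr t ht
  have hr0 : 0 < r := by linarith
  have hint : ∀ c, Integrable (fun x => |f x - c| ^ r) μ := fun c => by
    simpa [ENNReal.toReal_ofReal hr0.le] using
      ((hf r hr).sub (memLp_const c)).integrable_norm_rpow (ENNReal.ofReal_ne_zero_iff.2 hr0)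
        ENNReal.ofReal_ne_top
  have hpt : ∀ᵐ x ∂μ, |f x - (t - d)| ^ r + S.indicator (fun _ => G ^ r * (d / G)) x
      ≤ |f x - t| ^ r + L ^ r := by
    filter_upwards [hA] with x hAx
    by_cases hxS : x ∈ S
    · have hxB : f x < B := hxS
      have hy : G ≤ t - d - f x := by linarith
      have hy0 : 0 < t - d - f x := hG.trans_le hy
      have hgain : G ^ r * (d / G) ≤ r * d * (t - d - f x) ^ (r - 1) := by
        calc G ^ r * (d / G) = 1 * d * G ^ (r - 1) := by
              rw [Real.rpow_sub_one hG.ne']; ring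
          _ ≤ r * d * (t - d - f x) ^ (r - 1) := by gcongr
      have hbern := Real.rpow_add_mul_rpow_sub_one_le_rpow_add hy0 hd.le hr
      have e1 : |f x - (t - d)| = t - d - f x := by rw [abs_sub_comm, abs_of_pos hy0]
      have e2 : |f x - t| = t - d - f x + d := by
        rw [abs_sub_comm, abs_of_pos (by linarith)]; ring
      rw [indicator_of_mem hxS, e1, e2]
      linarith [Real.rpow_nonneg (le_max_right (A - K + d) 0) r]
    · have hmax : max (f x - (t - d)) 0 ≤ L := max_le_max_right 0 (by linarith)
      rw [indicator_of_notMem hxS, add_zero]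
      have := Real.abs_sub_rpow_le_abs_sub_add_rpow_add (u := f x) (s := t - d) hd.le hr0.le
      rw [sub_add_cancel] at this
      linarith [Real.rpow_le_rpow (le_max_right _ _) hmax hr0.le]
  have hind : Integrable (S.indicator fun _ => G ^ r * (d / G)) μ :=
    (integrable_const _).indicator₀ hSm
  have hmono : ∫ x, (|f x - (t - d)| ^ r + S.indicator (fun _ => G ^ r * (d / G)) x) ∂μ
      ≤ ∫ x, (|f x - t| ^ r + L ^ r) ∂μ :=
    integral_mono_ae ((hint _).add hind) ((hint t).add (integrable_const _)) hpt
  rw [integral_add (hint _) hind, integral_add (hint t) (integrable_const _),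
    integral_indicator₀ hSm, setIntegral_const, integral_const] at hmono
  simp only [smul_eq_mul] at hmono
  linarith

theorem eventually_lt_of_isMinOn_eLpNorm_sub (hf : ∀ r, 1 ≤ r → MemLp f (ENNReal.ofReal r) μ)
    {τ : ℝ → ℝ}
    (hτ : ∀ᶠ r in atTop,
      IsMinOn (fun t => eLpNorm (fun x => f x - t) (ENNReal.ofReal r) μ) univ (τ r))
    {A B K : ℝ} (hA : ∀ᵐ x ∂μ, f x ≤ A) (hB : μ {x | f x < B} ≠ 0) (hBK : B < K)
    (hABK : A + B < 2 * K) :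
    ∀ᶠ r in atTop, τ r < K := by
  obtain ⟨d, hd, hBdK, hABdK⟩ : ∃ d, 0 < d ∧ B + d < K ∧ A + B + 2 * d < 2 * K :=
    ⟨min (K - B) (2 * K - A - B) / 4,
      by have := lt_min (sub_pos.2 hBK) (by linarith : 0 < 2 * K - A - B); positivity,
      by linarith [min_le_left (K - B) (2 * K - A - B)],
      by linarith [min_le_right (K - B) (2 * K - A - B)]⟩
  filter_upwards [eventually_integral_abs_sub_rpow_lt hf hA hB hd hBdK hABdK, hτ,
    eventually_gt_atTop 1] with r hlt hmin hr
  by_contra! hK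
  have hmem : ∀ c, MemLp (fun x => f x - c) (ENNReal.ofReal r) μ := fun c =>
    (hf r hr.le).sub (memLp_const c)
  refine (isMinOn_univ_iff.1 hmin (τ r - d)).not_gt
    (eLpNorm_lt_eLpNorm_of_integral_rpow_lt (by linarith) (hmem _) (hmem _) ?_)
  simpa only [Real.norm_eq_abs] using hlt (τ r) hK

theorem eventually_gt_of_isMinOn_eLpNorm_sub (hf : ∀ r, 1 ≤ r → MemLp f (ENNReal.ofReal r) μ)
    {τ : ℝ → ℝ}
    (hτ : ∀ᶠ r in atTop,
      IsMinOn (fun t => eLpNorm (fun x => f x - t) (ENNReal.ofReal r) μ) univ (τ r))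
    {A B K : ℝ} (hA : ∀ᵐ x ∂μ, A ≤ f x) (hB : μ {x | B < f x} ≠ 0) (hKB : K < B)
    (hABK : 2 * K < A + B) :
    ∀ᶠ r in atTop, K < τ r := by
  have hneg : ∀ c, (fun x => -f x - c) = -fun x => f x - -c := fun c => by
    ext; simp only [Pi.neg_apply]; ring
  have hτneg : ∀ᶠ r in atTop,
      IsMinOn (fun t => eLpNorm (fun x => -f x - t) (ENNReal.ofReal r) μ) univ (-τ r) :=
    hτ.mono fun r hr => isMinOn_univ_iff.2 fun t => by
      simpa only [hneg, eLpNorm_neg, neg_neg] using isMinOn_univ_iff.1 hr (-t)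
  have := eventually_lt_of_isMinOn_eLpNorm_sub (f := fun x => -f x) (fun r hr => (hf r hr).neg)
    hτneg (A := -A) (B := -B) (hA.mono fun x hx => neg_le_neg hx)
    (by simpa only [neg_lt_neg_iff] using hB)
    (neg_lt_neg hKB) (by linarith)
  exact this.mono fun r hr => neg_lt_neg_iff.1 hr

theorem tendsto_essInf_add_essSup_div_two_of_isMinOn [NeZero μ]
    (hf : ∀ r, 1 ≤ r → MemLp f (ENNReal.ofReal r) μ)
    (hbd : essInf (fun x => (f x : EReal)) μ ≠ ⊥ ∨ essSup (fun x => (f x : EReal)) μ ≠ ⊤)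
    {τ : ℝ → ℝ}
    (hτ : ∀ᶠ r in atTop,
      IsMinOn (fun t => eLpNorm (fun x => f x - t) (ENNReal.ofReal r) μ) univ (τ r)) :
    Tendsto (fun r => (τ r : EReal)) atTop (𝓝 ((essInf (fun x => (f x : EReal)) μ
      + essSup (fun x => (f x : EReal)) μ) / 2)) := by
  set m := essInf (fun x => (f x : EReal)) μ
  set M := essSup (fun x => (f x : EReal)) μ
  have hmf : ∀ᵐ x ∂μ, m ≤ f x := ae_essInf_le
  have hfM : ∀ᵐ x ∂μ, (f x : EReal) ≤ M := ae_le_essSup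
  obtain ⟨x₀, hmx₀, hx₀M⟩ := (hmf.and hfM).exists
  have hm : m ≠ ⊤ := ne_top_of_le_ne_top (EReal.coe_ne_top _) hmx₀
  have hM : M ≠ ⊥ := ne_bot_of_le_ne_bot (EReal.coe_ne_bot _) hx₀M
  have hmM : m ≤ M := hmx₀.trans hx₀M
  refine tendsto_order.2 ⟨fun y hy => ?_, fun y hy => ?_⟩
  · obtain ⟨K, hyK, hK⟩ := EReal.lt_iff_exists_real_btwn.1 hy
    obtain ⟨A, B, hAm, hBM, hKB, hABK⟩ :=
      EReal.exists_bounds_of_lt_add_div_two hmM hm hK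
    have hA : ∀ᵐ x ∂μ, A ≤ f x := hmf.mono fun x hx => EReal.coe_le_coe_iff.1 (hAm.trans hx)
    have hB : μ {x | B < f x} ≠ 0 := fun h0 => hBM.not_ge <| essSup_le_of_ae_le _ <|
      ae_iff.2 (by simpa only [EReal.coe_le_coe_iff, not_le] using h0)
    filter_upwards [eventually_gt_of_isMinOn_eLpNorm_sub hf hτ hA hB hKB hABK] with r hr
    exact hyK.trans (EReal.coe_lt_coe_iff.2 hr)
  · obtain ⟨K, hK, hKy⟩ := EReal.lt_iff_exists_real_btwn.1 hy
    obtain ⟨A, B, hMA, hmB, hBK, hABK⟩ :=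
      EReal.exists_bounds_of_add_div_two_lt hmM hM hbd hK
    have hA : ∀ᵐ x ∂μ, f x ≤ A := hfM.mono fun x hx => EReal.coe_le_coe_iff.1 (hx.trans hMA)
    have hB : μ {x | f x < B} ≠ 0 := fun h0 => hmB.not_ge <| le_essInf_of_ae_le _ <|
      ae_iff.2 (by simpa only [EReal.coe_le_coe_iff, not_le] using h0)
    filter_upwards [eventually_lt_of_isMinOn_eLpNorm_sub hf hτ hA hB hBK hABK] with r hr
    exact (EReal.coe_lt_coe_iff.2 hr).trans hKy

end MeasureTheory

theorem stmt16 (a b : ℝ) (hab : a < b) (f : ℝ → ℝ)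
    (hLr : ∀ r : ℝ, 1 ≤ r → MemLp f (ENNReal.ofReal r) (volume.restrict (Set.Icc a b)))
    (hbd : MemLp (fun x => max (-f x) 0) ⊤ (volume.restrict (Set.Icc a b)) ∨
           MemLp (fun x => max (f x) 0) ⊤ (volume.restrict (Set.Icc a b)))
    (τ : ℝ → ℝ)
    (hτ : ∀ r : ℝ, 1 < r → ∀ t : ℝ,
        eLpNorm (fun x => f x - τ r) (ENNReal.ofReal r) (volume.restrict (Set.Icc a b))
          ≤ eLpNorm (fun x => f x - t) (ENNReal.ofReal r) (volume.restrict (Set.Icc a b))) :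
    Tendsto (fun r : ℝ => ((τ r : ℝ) : EReal)) atTop
      (nhds ((essInf (fun x => (f x : EReal)) (volume.restrict (Set.Icc a b))
        + essSup (fun x => (f x : EReal)) (volume.restrict (Set.Icc a b))) / 2)) := by
  have : NeZero (volume.restrict (Icc a b)) := ⟨by simpa [Measure.restrict_eq_zero] using hab⟩
  exact tendsto_essInf_add_essSup_div_two_of_isMinOn hLr
    (hbd.imp essInf_coe_ne_bot_of_memLp_top essSup_coe_ne_top_of_memLp_top)
    ((eventually_gt_atTop 1).mono fun r hr => isMinOn_univ_iff.2 (hτ r hr))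
end

section
/- Let μ be a Borel probability measure on ℝ with finite first moment, F_μ its distribution function and F_μ⁻¹(t) = sup{x : F_μ(x) ≤ t} its upper quantile function. Then for every n ≥ 1, the uniform discrete measure ν_n = (1/n) Σ_{i=1}^n δ_{x_i} with x_i = F_μ⁻¹((2i−1)/(2n)) minimizes the L¹-Kantorovich distance d₁(ν, μ) over all measures ν of the form (1/n) Σ_{i=1}^n δ_{y_i} with y_1 ≤ … ≤ y_n real. -/
open Set MeasureTheory
open scoped ENNReal

/-- The distribution function of a measure on `ℝ`. -/
noncomputable def cdf (μ : Measure ℝ) (x : ℝ) : ℝ := (μ (Set.Iic x)).toReal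

/-- The (upper) quantile function `F_μ⁻¹(t) = sup {x : F_μ(x) ≤ t}`. -/
noncomputable def quantile (μ : Measure ℝ) (t : ℝ) : ℝ := sSup {x : ℝ | cdf μ x ≤ t}

/-- The discrete measure `(1/n) ∑_{i=1}^n δ_{y_i}`. -/
noncomputable def unifAtoms (n : ℕ) (y : Fin n → ℝ) : Measure ℝ :=
  (n : ℝ≥0∞)⁻¹ • ∑ i, Measure.dirac (y i)

/-!
At each `x`, the distribution function of `(1/n) ∑ δ_{y_i}` takes a value in the grid
`{0, 1/n, …, 1}`. For the atoms `x_i = F_μ⁻¹((2i-1)/(2n))` the value is `k/n` with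
`k = #{i | x_i ≤ x}`, and the quantile inequalities give `(2k-1)/(2n) ≤ F_μ(x) ≤ (2k+1)/(2n)`:
`k/n` is a grid point nearest to `F_μ(x)`. So the integrand `|F_μ - F_ν|` is minimised pointwise.
The integrands are integrable because, by Tonelli, `∫_{x<a} F_μ(x) dx = ∫ (a - t)⁺ dμ(t)` and
`∫_{x≥a} (1 - F_μ(x)) dx = ∫ (t - a)⁺ dμ(t)` are finite.
-/

open Finset in
lemma cdf_unifAtoms (n : ℕ) (y : Fin n → ℝ) (x : ℝ) :
    cdf (unifAtoms n y) x = (#{i | y i ≤ x} : ℝ) / n := by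
  have hdirac (i : Fin n) : Measure.dirac (y i) (Iic x) = if y i ≤ x then 1 else 0 := by
    simp [Measure.dirac_apply' _ measurableSet_Iic, indicator_apply]
  simp [cdf, unifAtoms, Measure.finsetSum_apply, hdirac, ENNReal.toReal_mul, div_eq_inv_mul]

section Quantile

variable {μ : Measure ℝ} [IsProbabilityMeasure μ]

lemma cdf_eq_probabilityTheory_cdf : cdf μ = ProbabilityTheory.cdf μ := by
  ext x
  rw [ProbabilityTheory.cdf_eq_real, cdf, measureReal_def]

lemma monotone_cdf : Monotone (cdf μ) := by
  rw [cdf_eq_probabilityTheory_cdf]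
  exact ProbabilityTheory.monotone_cdf μ

lemma cdf_le_one (x : ℝ) : cdf μ x ≤ 1 := by
  rw [cdf_eq_probabilityTheory_cdf]
  exact ProbabilityTheory.cdf_le_one μ x

lemma nonempty_setOf_cdf_le {t : ℝ} (ht : 0 < t) : {x | cdf μ x ≤ t}.Nonempty := by
  rw [cdf_eq_probabilityTheory_cdf]
  exact ((ProbabilityTheory.tendsto_cdf_atBot μ).eventually_le_const ht).exists

lemma bddAbove_setOf_cdf_le {t : ℝ} (ht : t < 1) : BddAbove {x | cdf μ x ≤ t} := by
  obtain ⟨b, hb⟩ := ((ProbabilityTheory.tendsto_cdf_atTop μ).eventually_const_lt ht).exists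
  rw [← cdf_eq_probabilityTheory_cdf] at hb
  exact ⟨b, fun x hx => le_of_not_gt fun hbx => (hx.trans_lt hb).not_ge (monotone_cdf hbx.le)⟩

lemma le_cdf_quantile {t : ℝ} (ht : t < 1) : t ≤ cdf μ (quantile μ t) := by
  have hright : ContinuousWithinAt (cdf μ) (Ioi (quantile μ t)) (quantile μ t) := by
    rw [cdf_eq_probabilityTheory_cdf]
    exact ((ProbabilityTheory.cdf μ).right_continuous _).mono Ioi_subset_Ici_self
  refine ge_of_tendsto hright (eventually_nhdsWithin_of_forall fun x hx => ?_)
  exact le_of_not_ge fun hxt => (le_csSup (bddAbove_setOf_cdf_le ht) hxt).not_gt hx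

lemma cdf_le_of_lt_quantile {t x : ℝ} (ht : 0 < t) (hx : x < quantile μ t) : cdf μ x ≤ t := by
  obtain ⟨z, hz, hxz⟩ := exists_lt_of_lt_csSup (nonempty_setOf_cdf_le ht) hx
  exact (monotone_cdf hxz.le).trans hz

lemma quantile_mono {s t : ℝ} (hs : 0 < s) (ht : t < 1) (hst : s ≤ t) :
    quantile μ s ≤ quantile μ t :=
  csSup_le_csSup (bddAbove_setOf_cdf_le ht) (nonempty_setOf_cdf_le hs) fun _ hx => hx.trans hst

end Quantile

open Finset in
lemma Monotone.le_iff_lt_card_filter {α : Type*} [Preorder α] [DecidableLE α] {n : ℕ}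
    {z : Fin n → α} (hz : Monotone z) (x : α) (i : Fin n) :
    z i ≤ x ↔ (i : ℕ) < #{j | z j ≤ x} := by
  constructor
  · intro hi
    have hsub : Finset.Iic i ⊆ ({j | z j ≤ x} : Finset (Fin n)) := fun j hj =>
      mem_filter.2 ⟨mem_univ j, (hz (Finset.mem_Iic.1 hj)).trans hi⟩
    exact Nat.lt_iff_add_one_le.2 ((Fin.card_Iic i).symm.trans_le (Finset.card_le_card hsub))
  · intro hcard
    by_contra hi
    have hsub : ({j | z j ≤ x} : Finset (Fin n)) ⊆ Finset.Iio i := fun j hj => Finset.mem_Iio.2 <|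
      lt_of_not_ge fun hij => hi ((hz hij).trans (mem_filter.1 hj).2)
    exact (Finset.card_le_card hsub).trans_eq (Fin.card_Iio i) |>.not_gt hcard

lemma abs_sub_div_le_abs_sub_div {a : ℝ} {n k : ℕ} (hk : |a - k / n| ≤ 1 / (2 * n)) (j : ℕ) :
    |a - k / n| ≤ |a - j / n| := by
  obtain rfl | hjk := eq_or_ne j k
  · rfl
  have hgap : 1 / (n : ℝ) ≤ |(k : ℝ) / n - j / n| := by
    rw [← sub_div, abs_div, Nat.abs_cast]
    gcongr
    exact_mod_cast Int.one_le_abs (sub_ne_zero.2 (Nat.cast_injective.ne hjk.symm : (k : ℤ) ≠ j))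
  have hhalf : 1 / (2 * n : ℝ) = 1 / n / 2 := by ring
  linarith [abs_sub_le (k / n : ℝ) a (j / n), abs_sub_comm (k / n : ℝ) a]

lemma lintegral_measure_setOf_comm {α β : Type*} [MeasurableSpace α] [MeasurableSpace β]
    (ν : Measure α) (μ : Measure β) [SFinite ν] [SFinite μ] {r : α → β → Prop}
    (hr : MeasurableSet {p : α × β | r p.1 p.2}) :
    ∫⁻ x, μ {y | r x y} ∂ν = ∫⁻ y, ν {x | r x y} ∂μ :=
  (Measure.prod_apply hr).symm.trans (Measure.prod_apply_symm hr)

section Integrability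

variable {μ : Measure ℝ}

lemma integrableOn_cdf_Iio [IsFiniteMeasure μ] (hμ : Integrable id μ) (a : ℝ) :
    IntegrableOn (cdf μ) (Iio a) := by
  have hmono : Monotone fun x => μ (Iic x) := fun _ _ h => measure_mono (Iic_subset_Iic.2 h)
  refine integrable_toReal_of_lintegral_ne_top hmono.measurable.aemeasurable ?_
  have hswap := lintegral_measure_setOf_comm (volume.restrict (Iio a)) μ
    (r := fun x t => t ≤ x) (measurableSet_le measurable_snd measurable_fst)
  have hinner (t : ℝ) : volume.restrict (Iio a) {x | t ≤ x} = ENNReal.ofReal (a - t) := by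
    rw [Measure.restrict_apply' measurableSet_Iio]
    exact congrArg volume Ici_inter_Iio |>.trans Real.volume_Ico
  simp only [hinner] at hswap
  change ∫⁻ x in Iio a, μ {y | y ≤ x} ≠ ∞
  rw [hswap]
  exact ((integrable_const a).sub hμ).lintegral_lt_top.ne

lemma one_sub_cdf [IsProbabilityMeasure μ] (x : ℝ) : 1 - cdf μ x = (μ (Ioi x)).toReal := by
  rw [← compl_Iic, prob_compl_eq_one_sub measurableSet_Iic,
    ENNReal.toReal_sub_of_le prob_le_one ENNReal.one_ne_top, ENNReal.toReal_one, cdf]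

lemma integrableOn_one_sub_cdf_Ici [IsProbabilityMeasure μ] (hμ : Integrable id μ) (a : ℝ) :
    IntegrableOn (fun x => 1 - cdf μ x) (Ici a) := by
  simp only [one_sub_cdf]
  have hanti : Antitone fun x => μ (Ioi x) := fun _ _ h => measure_mono (Ioi_subset_Ioi h)
  refine integrable_toReal_of_lintegral_ne_top hanti.measurable.aemeasurable ?_
  have hswap := lintegral_measure_setOf_comm (volume.restrict (Ici a)) μ
    (r := fun x t => x < t) (measurableSet_lt measurable_fst measurable_snd)
  have hinner (t : ℝ) : volume.restrict (Ici a) {x | x < t} = ENNReal.ofReal (t - a) := by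
    rw [Measure.restrict_apply' measurableSet_Ici]
    exact congrArg volume Iio_inter_Ici |>.trans Real.volume_Ico
  simp only [hinner] at hswap
  change ∫⁻ x in Ici a, μ {y | x < y} ≠ ∞
  rw [hswap]
  exact (hμ.sub (integrable_const a)).lintegral_lt_top.ne

lemma integrable_cdf_sub_indicator [IsProbabilityMeasure μ] (hμ : Integrable id μ) (a : ℝ) :
    Integrable fun x => cdf μ x - (Ici a).indicator 1 x := by
  rw [← integrableOn_univ, ← Iio_union_Ici (a := a), integrableOn_union]
  constructor
  · refine (integrableOn_cdf_Iio hμ a).congr_fun (fun x hx => ?_) measurableSet_Iio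
    simp [indicator_of_notMem (notMem_Ici.2 (mem_Iio.1 hx))]
  · refine (integrableOn_one_sub_cdf_Ici hμ a).neg.congr_fun (fun x hx => ?_) measurableSet_Ici
    simp [indicator_of_mem hx]

lemma integrable_cdf_sub_cdf_unifAtoms [IsProbabilityMeasure μ] (hμ : Integrable id μ) {n : ℕ}
    (hn : 0 < n) (y : Fin n → ℝ) :
    Integrable fun x => cdf μ x - cdf (unifAtoms n y) x := by
  have hsum (x : ℝ) : cdf μ x - cdf (unifAtoms n y) x
      = (n : ℝ)⁻¹ * ∑ i, (cdf μ x - (Ici (y i)).indicator 1 x) := by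
    simp only [cdf_unifAtoms, Finset.sum_sub_distrib, Finset.sum_const, Finset.card_univ,
      Fintype.card_fin, nsmul_eq_mul, indicator_apply, mem_Ici, Pi.one_apply, Finset.sum_boole]
    field_simp
  simp only [hsum]
  exact (integrable_finsetSum _ fun i _ => integrable_cdf_sub_indicator hμ (y i)).const_mul _

end Integrability

/-- With `i : Fin n` counted from `0`, the level `(2i+1)/(2n)` is the paper's `(2i-1)/(2n)`. -/
noncomputable def midQuantiles (μ : Measure ℝ) (n : ℕ) : Fin n → ℝ :=
  fun i => quantile μ ((2 * (i : ℝ) + 1) / (2 * n))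

section MidQuantiles

variable {μ : Measure ℝ} [IsProbabilityMeasure μ] {n : ℕ}

lemma midLevel_pos (i : Fin n) : 0 < (2 * (i : ℝ) + 1) / (2 * n) := by
  have : (0 : ℝ) < n := Nat.cast_pos.2 i.pos
  positivity

lemma midLevel_lt_one (i : Fin n) : (2 * (i : ℝ) + 1) / (2 * n) < 1 := by
  have hi : (i : ℝ) + 1 ≤ n := by exact_mod_cast i.isLt
  rw [div_lt_one (by linarith)]
  linarith

lemma monotone_midQuantiles : Monotone (midQuantiles μ n) := fun i j hij =>
  quantile_mono (midLevel_pos i) (midLevel_lt_one j) (by gcongr; exact_mod_cast hij)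

open Finset in
lemma abs_cdf_sub_card_midQuantiles_le (hn : 0 < n) (x : ℝ) :
    |cdf μ x - #{i | midQuantiles μ n i ≤ x} / n| ≤ 1 / (2 * n) := by
  set k := #{i | midQuantiles μ n i ≤ x}
  have hkn : k ≤ n := (card_filter_le _ _).trans_eq (card_fin n)
  have hn' : (0 : ℝ) < n := Nat.cast_pos.2 hn
  have hmem (i : Fin n) := (monotone_midQuantiles (μ := μ)).le_iff_lt_card_filter x i
  rw [abs_le]
  constructor
  · obtain hk | hk := k.eq_zero_or_pos
    · have hF : 0 ≤ cdf μ x := ENNReal.toReal_nonneg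
      rw [hk, Nat.cast_zero, zero_div, sub_zero]
      linarith [show 0 < 1 / (2 * n : ℝ) by positivity]
    · let i : Fin n := ⟨k - 1, by omega⟩
      have hix : midQuantiles μ n i ≤ x := (hmem i).2 (by simp only [i]; omega)
      have hlevel := (le_cdf_quantile (midLevel_lt_one i)).trans (monotone_cdf hix)
      have hi : (i : ℝ) = k - 1 := by simp only [i]; push_cast [Nat.cast_sub hk]; ring
      rw [hi] at hlevel
      have hsplit : (2 * ((k : ℝ) - 1) + 1) / (2 * n) = k / n - 1 / (2 * n) := by
        field_simp; ring
      linarith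
  · obtain hk | hk := hkn.eq_or_lt
    · have hF : cdf μ x ≤ 1 := cdf_le_one x
      rw [hk, div_self hn'.ne']
      linarith [show 0 < 1 / (2 * n : ℝ) by positivity]
    · let i : Fin n := ⟨k, hk⟩
      have hxi : x < midQuantiles μ n i := lt_of_not_ge fun h => ((hmem i).1 h).false
      have hlevel := cdf_le_of_lt_quantile (midLevel_pos i) hxi
      have hsplit : (2 * (k : ℝ) + 1) / (2 * n) = k / n + 1 / (2 * n) := by field_simp
      linarith

lemma abs_cdf_sub_cdf_midQuantiles_le (hn : 0 < n) (x : ℝ) (y : Fin n → ℝ) :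
    |cdf μ x - cdf (unifAtoms n (midQuantiles μ n)) x| ≤ |cdf μ x - cdf (unifAtoms n y) x| := by
  rw [cdf_unifAtoms, cdf_unifAtoms]
  exact abs_sub_div_le_abs_sub_div (abs_cdf_sub_card_midQuantiles_le hn x) _

end MidQuantiles

theorem stmt17_general (μ : Measure ℝ) [IsProbabilityMeasure μ]
    (hmom : Integrable (fun x : ℝ => |x|) μ) (n : ℕ) (hn : 0 < n)
    (y : Fin n → ℝ) :
    ∫ x : ℝ, |cdf μ x
        - cdf (unifAtoms n (fun i => quantile μ ((2 * (i : ℝ) + 1) / (2 * n)))) x|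
      ≤ ∫ x : ℝ, |cdf μ x - cdf (unifAtoms n y) x| := by
  have hμ : Integrable id μ := (integrable_norm_iff aestronglyMeasurable_id).1 hmom
  exact integral_mono (integrable_cdf_sub_cdf_unifAtoms hμ hn _).abs
    (integrable_cdf_sub_cdf_unifAtoms hμ hn y).abs
    fun x => abs_cdf_sub_cdf_midQuantiles_le hn x y

theorem stmt17 (μ : Measure ℝ) [IsProbabilityMeasure μ]
    (hmom : Integrable (fun x : ℝ => |x|) μ) (n : ℕ) (hn : 0 < n)
    (y : Fin n → ℝ) (hy : Monotone y) :
    ∫ x : ℝ, |cdf μ x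
        - cdf (unifAtoms n (fun i => quantile μ ((2 * (i : ℝ) + 1) / (2 * n)))) x|
      ≤ ∫ x : ℝ, |cdf μ x - cdf (unifAtoms n y) x| :=
  stmt17_general μ hmom n hn y
end
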